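/- arXiv:2007.11367 — 3 statements merged into one kernel-verified Lean document; each statement's English description precedes it below -/
import Mathlib

section
/- Let Γ = ⟨x,y | yxy⁻¹ = x⁻¹⟩ be the fundamental group of the Klein bottle. Then every subgroup of finite index in Γ is isomorphic either to Γ or to ℤ², and for every positive integer n the number of subgroups of index n in Γ isomorphic to ℤ² equals σ₁(n/2), while the number of subgroups of index n in Γ isomorphic to Γ equals σ₁(n) − σ₁(n/2) (with the convention that a term vanishes when the corresponding division is not exact). -/
open Finset

/-- `σ₀(n)`: number of divisors of `n`. -/
def sigma0 (n : ℕ) : ℕ := n.divisors.card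

/-- `σ₁(n)`: sum of divisors of `n`. -/
def sigma1 (n : ℕ) : ℕ := ∑ d ∈ n.divisors, d

/-- `σ₂(n) = ∑_{abc=n} a`, over ordered triples of positive integers. -/
def sigma2 (n : ℕ) : ℕ :=
  ∑ p ∈ n.divisorsAntidiagonal, ∑ _q ∈ p.2.divisorsAntidiagonal, p.1

/-- `d₃(n) = ∑_{abc=n} 1`, the number of ordered triples of positive integers with `abc = n`. -/
def d3 (n : ℕ) : ℕ :=
  ∑ p ∈ n.divisorsAntidiagonal, ∑ _q ∈ p.2.divisorsAntidiagonal, 1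

/-- `χ(n) = ∑_{abc=n} a*b`, over ordered triples of positive integers. -/
def chi (n : ℕ) : ℕ :=
  ∑ p ∈ n.divisorsAntidiagonal, ∑ q ∈ p.2.divisorsAntidiagonal, p.1 * q.1

/-- `ω(n) = ∑_{abc=n} a²b`, over ordered triples of positive integers. -/
def omega' (n : ℕ) : ℕ :=
  ∑ p ∈ n.divisorsAntidiagonal, ∑ q ∈ p.2.divisorsAntidiagonal, p.1 ^ 2 * q.1

/-- `f(n/k)`, with the convention that the value is `0` when `k` does not divide `n`. -/
def atDiv (f : ℕ → ℕ) (k n : ℕ) : ℕ := if k ∣ n then f (n / k) else 0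

/-- Relations of `π₁(B₃) = ⟨x,y,z | yxy⁻¹ = x⁻¹, zxz⁻¹ = x⁻¹, zyz⁻¹ = y⁻¹⟩`. -/
def B3Rels : Set (FreeGroup (Fin 3)) :=
  {FreeGroup.of 1 * FreeGroup.of 0 * (FreeGroup.of 1)⁻¹ * FreeGroup.of 0,
   FreeGroup.of 2 * FreeGroup.of 0 * (FreeGroup.of 2)⁻¹ * FreeGroup.of 0,
   FreeGroup.of 2 * FreeGroup.of 1 * (FreeGroup.of 2)⁻¹ * FreeGroup.of 1}

/-- `π₁(B₃)`. -/
abbrev PiB3 := PresentedGroup B3Rels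

/-- Relations of `π₁(B₄) = ⟨x,y,z | yxy⁻¹ = x⁻¹, zxz⁻¹ = x⁻¹, zyz⁻¹ = xy⁻¹⟩`. -/
def B4Rels : Set (FreeGroup (Fin 3)) :=
  {FreeGroup.of 1 * FreeGroup.of 0 * (FreeGroup.of 1)⁻¹ * FreeGroup.of 0,
   FreeGroup.of 2 * FreeGroup.of 0 * (FreeGroup.of 2)⁻¹ * FreeGroup.of 0,
   FreeGroup.of 2 * FreeGroup.of 1 * (FreeGroup.of 2)⁻¹ * FreeGroup.of 1 * (FreeGroup.of 0)⁻¹}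

/-- `π₁(B₄)`. -/
abbrev PiB4 := PresentedGroup B4Rels

/-- Relations of `π₁(G₂) = ⟨x,y,z | xyx⁻¹y⁻¹ = 1, zxz⁻¹ = x⁻¹, zyz⁻¹ = y⁻¹⟩`. -/
def G2Rels : Set (FreeGroup (Fin 3)) :=
  {FreeGroup.of 0 * FreeGroup.of 1 * (FreeGroup.of 0)⁻¹ * (FreeGroup.of 1)⁻¹,
   FreeGroup.of 2 * FreeGroup.of 0 * (FreeGroup.of 2)⁻¹ * FreeGroup.of 0,
   FreeGroup.of 2 * FreeGroup.of 1 * (FreeGroup.of 2)⁻¹ * FreeGroup.of 1}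

/-- `π₁(G₂)`. -/
abbrev PiG2 := PresentedGroup G2Rels

/-- Relations of `π₁(B₁) = ⟨x,y,z | xyx⁻¹y⁻¹ = 1, yzy⁻¹z⁻¹ = 1, zxz⁻¹ = x⁻¹⟩`. -/
def B1Rels : Set (FreeGroup (Fin 3)) :=
  {FreeGroup.of 0 * FreeGroup.of 1 * (FreeGroup.of 0)⁻¹ * (FreeGroup.of 1)⁻¹,
   FreeGroup.of 1 * FreeGroup.of 2 * (FreeGroup.of 1)⁻¹ * (FreeGroup.of 2)⁻¹,
   FreeGroup.of 2 * FreeGroup.of 0 * (FreeGroup.of 2)⁻¹ * FreeGroup.of 0}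

/-- `π₁(B₁)`. -/
abbrev PiB1 := PresentedGroup B1Rels

/-- Relations of `π₁(B₂) = ⟨x,y,z | xyx⁻¹y⁻¹ = 1, zxz⁻¹ = x⁻¹, zyz⁻¹ = xy⟩`. -/
def B2Rels : Set (FreeGroup (Fin 3)) :=
  {FreeGroup.of 0 * FreeGroup.of 1 * (FreeGroup.of 0)⁻¹ * (FreeGroup.of 1)⁻¹,
   FreeGroup.of 2 * FreeGroup.of 0 * (FreeGroup.of 2)⁻¹ * FreeGroup.of 0,
   FreeGroup.of 2 * FreeGroup.of 1 * (FreeGroup.of 2)⁻¹ * (FreeGroup.of 0 * FreeGroup.of 1)⁻¹}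

/-- `π₁(B₂)`. -/
abbrev PiB2 := PresentedGroup B2Rels

/-- Relations of the Klein bottle group `Γ = ⟨x,y | yxy⁻¹ = x⁻¹⟩`. -/
def KleinRels : Set (FreeGroup (Fin 2)) :=
  {FreeGroup.of 1 * FreeGroup.of 0 * (FreeGroup.of 1)⁻¹ * FreeGroup.of 0}

/-- The fundamental group of the Klein bottle. -/
abbrev KleinGroup := PresentedGroup KleinRels

/-- `ℤ³` written multiplicatively. -/
abbrev Z3 := Multiplicative (ℤ × ℤ × ℤ)

/-- `ℤ²` written multiplicatively. -/
abbrev Z2 := Multiplicative (ℤ × ℤ)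

/-- The number of subgroups of index `n` in `G` that are isomorphic to `H`. -/
noncomputable def numSubgroupsIso (G : Type) [Group G] (H : Type) [Group H] (n : ℕ) : ℕ :=
  Nat.card {Δ : Subgroup G // Δ.index = n ∧ Nonempty (Δ ≃* H)}

/-- The number of conjugacy classes of subgroups of index `n` in `G` isomorphic to `H`,
i.e. the number of orbits of the conjugation action of `G` on this set of subgroups. -/
noncomputable def numConjClassesIso (G : Type) [Group G] (H : Type) [Group H] (n : ℕ) : ℕ :=
  Nat.card (Quot (fun (A B : {Δ : Subgroup G // Δ.index = n ∧ Nonempty (Δ ≃* H)}) =>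
    ∃ g : G, B.1 = A.1.map (MulAut.conj g).toMonoidHom))

/-- sign `(-1)^m` as an integer. -/
def sg (m : ℤ) : ℤ := if Even m then 1 else -1

lemma sg_even {m : ℤ} (h : Even m) : sg m = 1 := if_pos h
lemma sg_odd {m : ℤ} (h : ¬ Even m) : sg m = -1 := if_neg h

lemma sg_add (m n : ℤ) : sg (m + n) = sg m * sg n := by
  by_cases hm : Even m <;> by_cases hn : Even n
  · rw [sg_even hm, sg_even hn, sg_even (Int.even_add.mpr (iff_of_true hm hn))]; ring
  · rw [sg_even hm, sg_odd hn, sg_odd (fun h => hn ((Int.even_add.mp h).mp hm))]; ring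
  · rw [sg_odd hm, sg_even hn, sg_odd (fun h => hm ((Int.even_add.mp h).mpr hn))]; ring
  · rw [sg_odd hm, sg_odd hn, sg_even (Int.even_add.mpr (iff_of_false hm hn))]; ring

lemma sg_mul_self (m : ℤ) : sg m * sg m = 1 := by
  by_cases h : Even m
  · rw [sg_even h]; ring
  · rw [sg_odd h]; ring

lemma sg_neg (m : ℤ) : sg (-m) = sg m := by
  unfold sg; simp

lemma sg_sq (m : ℤ) : sg m * sg m = 1 := sg_mul_self m

lemma sg_mul_cases (m n : ℤ) : sg (m * n) = if Even m ∨ Even n then 1 else -1 := by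
  by_cases h : Even m ∨ Even n
  · rw [if_pos h, sg_even (Int.even_mul.mpr h)]
  · rw [if_neg h, sg_odd (fun hc => h (Int.even_mul.mp hc))]

lemma sg_mul_even_right {m b : ℤ} (hb : Even b) : sg (m * b) = 1 :=
  sg_even (Int.even_mul.mpr (Or.inr hb))

lemma sg_mul_odd_right {m b : ℤ} (hb : ¬ Even b) : sg (m * b) = sg m := by
  by_cases hm : Even m
  · rw [sg_even (Int.even_mul.mpr (Or.inl hm)), sg_even hm]
  · rw [sg_odd (fun hc => (Int.even_mul.mp hc).elim hm hb), sg_odd hm]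

/-- The Klein bottle group modeled on `ℤ × ℤ`:
`(s, m) * (s', m') = (s + (-1)^m s', m + m')`. -/
def KB : Type := ℤ × ℤ

namespace KB

instance : Group KB where
  mul a b := (a.1 + sg a.2 * b.1, a.2 + b.2)
  one := ((0 : ℤ), (0 : ℤ))
  inv a := (-(sg a.2 * a.1), -a.2)
  mul_assoc a b c := by
    show ((a.1 + sg a.2 * b.1) + sg (a.2 + b.2) * c.1, (a.2 + b.2) + c.2)
       = (a.1 + sg a.2 * (b.1 + sg b.2 * c.1), a.2 + (b.2 + c.2))
    rw [sg_add]
    exact Prod.ext (by ring) (by ring)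
  one_mul a := by
    show ((0 : ℤ) + sg 0 * a.1, (0 : ℤ) + a.2) = a
    rw [sg_even Even.zero]
    exact Prod.ext (by simp) (by simp)
  mul_one a := by
    show (a.1 + sg a.2 * 0, a.2 + (0 : ℤ)) = a
    exact Prod.ext (by simp) (by simp)
  inv_mul_cancel a := by
    show (-(sg a.2 * a.1) + sg (-a.2) * a.1, -a.2 + a.2) = ((0 : ℤ), (0 : ℤ))
    rw [sg_neg]
    exact Prod.ext (by ring) (by ring)

/-- The element `(s, m)` of `KB`. -/
def mk (s m : ℤ) : KB := (s, m)

@[simp] lemma mk_fst (s m : ℤ) : (mk s m).1 = s := rfl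
@[simp] lemma mk_snd (s m : ℤ) : (mk s m).2 = m := rfl

lemma ext {a b : KB} (h1 : a.1 = b.1) (h2 : a.2 = b.2) : a = b := Prod.ext h1 h2

@[simp] lemma mk_eta (a : KB) : mk a.1 a.2 = a := rfl

lemma mk_eq_mk {s m s' m' : ℤ} : mk s m = mk s' m' ↔ s = s' ∧ m = m' := by
  constructor
  · intro h; exact ⟨congrArg Prod.fst h, congrArg Prod.snd h⟩
  · rintro ⟨rfl, rfl⟩; rfl

@[simp] lemma mk_mul (s m s' m' : ℤ) :
    mk s m * mk s' m' = mk (s + sg m * s') (m + m') := rfl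

@[simp] lemma mk_inv (s m : ℤ) : (mk s m)⁻¹ = mk (-(sg m * s)) (-m) := rfl

@[simp] lemma one_def : (1 : KB) = mk 0 0 := rfl

lemma mk_zpow_zero_right (s : ℤ) (k : ℤ) : (mk s 0) ^ k = mk (k * s) 0 := by
  induction k using Int.induction_on with
  | zero => simp
  | succ k ih =>
    rw [zpow_add_one, ih, mk_mul, sg_even Even.zero, mk_eq_mk]; constructor <;> ring
  | pred k ih =>
    rw [zpow_sub_one, ih, mk_inv, mk_mul, sg_even Even.zero, mk_eq_mk]
    constructor <;> ring

end KB

@[simp] lemma sg_zero : sg 0 = 1 := sg_even Even.zero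
@[simp] lemma sg_one : sg 1 = -1 := sg_odd (by simp [Int.even_iff])

/-- The cocycle `E b j`: for `b` even it is `j`, for `b` odd it is `0/1` by parity of `j`. -/
def Ee (b j : ℤ) : ℤ := if Even b then j else (if Even j then 0 else 1)

@[simp] lemma Ee_zero (b : ℤ) : Ee b 0 = 0 := by simp [Ee]
@[simp] lemma Ee_one (b : ℤ) : Ee b 1 = 1 := by
  simp [Ee, Int.even_iff]

lemma Ee_even {b : ℤ} (hb : Even b) (j : ℤ) : Ee b j = j := if_pos hb

lemma Ee_cocycle (b j j' : ℤ) : Ee b (j + j') = Ee b j + sg (j * b) * Ee b j' := by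
  by_cases hb : Even b
  · rw [Ee_even hb, Ee_even hb, Ee_even hb, sg_mul_even_right hb]; ring
  · rw [sg_mul_odd_right hb]
    unfold Ee
    rw [if_neg hb, if_neg hb, if_neg hb]
    by_cases hj : Even j <;> by_cases hj' : Even j'
    · rw [if_pos (Int.even_add.mpr (iff_of_true hj hj')), if_pos hj, if_pos hj', sg_even hj]; ring
    · rw [if_neg (fun h => hj' ((Int.even_add.mp h).mp hj)), if_pos hj,
        if_neg hj', sg_even hj]; ring
    · rw [if_neg (fun h => hj ((Int.even_add.mp h).mpr hj')), if_neg hj,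
        if_pos hj', sg_odd hj]; ring
    · rw [if_pos (Int.even_add.mpr (iff_of_false hj hj')), if_neg hj, if_neg hj', sg_odd hj]; ring

lemma Ee_neg (b j : ℤ) : Ee b (-j) = -(sg (j * b) * Ee b j) := by
  have h := Ee_cocycle b j (-j)
  simp only [add_neg_cancel, Ee_zero] at h
  have h3 : sg (j * b) * Ee b (-j) = -Ee b j := by linarith
  have h4 : sg (j * b) * (sg (j * b) * Ee b (-j)) = sg (j * b) * (-Ee b j) := by rw [h3]
  rw [← mul_assoc, sg_mul_self, one_mul] at h4
  rw [h4]; ring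

lemma Ee_neg_one (b : ℤ) : Ee b (-1) = -(sg b) := by
  have := Ee_neg b 1
  rwa [Ee_one, one_mul, mul_one] at this

namespace KB

lemma zpow_mk (t b : ℤ) (j : ℤ) : (mk t b) ^ j = mk (Ee b j * t) (j * b) := by
  induction j using Int.induction_on with
  | zero => simp
  | succ k ih =>
    rw [zpow_add_one, ih, mk_mul, mk_eq_mk, Ee_cocycle b k 1, Ee_one]
    constructor <;> ring
  | pred k ih =>
    rw [zpow_sub_one, ih, mk_inv, mk_mul, mk_eq_mk, sub_eq_add_neg (-(k:ℤ)) 1,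
      Ee_cocycle b (-(k:ℤ)) (-1), Ee_neg_one]
    constructor <;> ring

/-- The subgroup of `KB` generated by `(a, 0)` and `(t, b)`. -/
def W (a b t : ℤ) : Subgroup KB where
  carrier := {p | ∃ k j : ℤ, p = mk (k * a + Ee b j * t) (j * b)}
  one_mem' := ⟨0, 0, by simp⟩
  mul_mem' := by
    rintro p q ⟨k, j, rfl⟩ ⟨k', j', rfl⟩
    refine ⟨k + sg (j * b) * k', j + j', ?_⟩
    rw [mk_mul, mk_eq_mk, Ee_cocycle b j j']
    constructor <;> ring
  inv_mem' := by
    rintro p ⟨k, j, rfl⟩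
    refine ⟨-(sg (j * b) * k), -j, ?_⟩
    rw [mk_inv, mk_eq_mk, Ee_neg]
    constructor <;> ring

lemma mem_W {a b t : ℤ} {p : KB} :
    p ∈ W a b t ↔ ∃ k j : ℤ, p = mk (k * a + Ee b j * t) (j * b) := Iff.rfl

end KB

lemma dvd_sg_mul_iff {a m x : ℤ} : a ∣ sg m * x ↔ a ∣ x := by
  by_cases h : Even m
  · rw [sg_even h, one_mul]
  · rw [sg_odd h]; simp

namespace KB

lemma inv_mul_eq (p q : KB) : p⁻¹ * q = mk (sg p.2 * (q.1 - p.1)) (q.2 - p.2) := by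
  rw [← mk_eta p, ← mk_eta q, mk_inv, mk_mul, mk_eq_mk]
  simp only [mk_fst, mk_snd, sg_neg]
  constructor <;> ring

lemma mem_W_iff {a b t : ℤ} (hb : 0 < b) {p : KB} :
    p ∈ W a b t ↔ b ∣ p.2 ∧ a ∣ (p.1 - Ee b (p.2 / b) * t) := by
  constructor
  · rintro ⟨k, j, rfl⟩
    simp only [mk_fst, mk_snd]
    refine ⟨dvd_mul_left b j, ?_⟩
    rw [Int.mul_ediv_cancel _ hb.ne']
    exact ⟨k, by ring⟩
  · rintro ⟨⟨j, hj⟩, ⟨k, hk⟩⟩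
    refine ⟨k, j, ?_⟩
    rw [← mk_eta p, mk_eq_mk]
    have hdiv : p.2 / b = j := by rw [hj, Int.mul_ediv_cancel_left _ hb.ne']
    rw [hdiv] at hk
    exact ⟨by linarith, by linarith⟩

/-- Map whose fibers are the left cosets of `W a b t`. -/
def cmap (a b t : ℤ) (p : KB) : ZMod a.toNat × ZMod b.toNat :=
  (((p.1 + sg p.2 * Ee b (-(p.2 / b)) * t : ℤ) : ZMod a.toNat), ((p.2 : ℤ) : ZMod b.toNat))

lemma cmap_eq_iff {a b t : ℤ} (ha : 0 < a) (hb : 0 < b) (p q : KB) :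
    cmap a b t p = cmap a b t q ↔ p⁻¹ * q ∈ W a b t := by
  have hA : ((a.toNat : ℕ) : ℤ) = a := Int.toNat_of_nonneg ha.le
  have hB : ((b.toNat : ℕ) : ℤ) = b := Int.toNat_of_nonneg hb.le
  have hsnd : (((p.2 : ℤ) : ZMod b.toNat) = ((q.2 : ℤ) : ZMod b.toNat)) ↔ b ∣ q.2 - p.2 := by
    rw [ZMod.intCast_eq_intCast_iff, Int.modEq_iff_dvd, hB]
  have hfst : ∀ X Y : ℤ, ((X : ZMod a.toNat) = (Y : ZMod a.toNat)) ↔ a ∣ Y - X := by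
    intro X Y
    rw [ZMod.intCast_eq_intCast_iff, Int.modEq_iff_dvd, hA]
  rw [inv_mul_eq, mem_W_iff hb]
  simp only [mk_fst, mk_snd]
  constructor
  · intro h
    have h1 := congrArg Prod.fst h
    have h2 := congrArg Prod.snd h
    simp only [cmap] at h1 h2
    have hd : b ∣ q.2 - p.2 := hsnd.mp h2
    refine ⟨hd, ?_⟩
    obtain ⟨j0, hj0⟩ := hd
    have hj : (q.2 - p.2) / b = j0 := by rw [hj0, Int.mul_ediv_cancel_left _ hb.ne']
    have hq1 : q.2 / b = p.2 / b + j0 := by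
      have : q.2 = p.2 + b * j0 := by linarith
      rw [this, Int.add_mul_ediv_left _ _ hb.ne']
    have hD := (hfst _ _).mp h1
    rw [hj]
    -- key algebraic identity
    have e1 : sg p.2 * sg q.2 = sg (j0 * b) := by
      have h' : p.2 + q.2 = (p.2 + p.2) + j0 * b := by linarith
      rw [← sg_add, h', sg_add, sg_even ⟨p.2, rfl⟩, one_mul]
    have e2 : Ee b (-(p.2 / b)) = Ee b j0 + sg (j0 * b) * Ee b (-(p.2 / b + j0)) := by
      have h' := Ee_cocycle b j0 (-(p.2 / b + j0))
      rw [show j0 + -(p.2 / b + j0) = -(p.2 / b) by ring] at h'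
      exact h'
    have key : sg p.2 * ((q.1 + sg q.2 * Ee b (-(q.2 / b)) * t)
        - (p.1 + sg p.2 * Ee b (-(p.2 / b)) * t))
        = sg p.2 * (q.1 - p.1) - Ee b j0 * t := by
      rw [hq1]
      linear_combination (t * Ee b (-(p.2 / b + j0))) * e1
        - (t * Ee b (-(p.2 / b))) * sg_mul_self p.2 - t * e2
    have : a ∣ sg p.2 * ((q.1 + sg q.2 * Ee b (-(q.2 / b)) * t)
        - (p.1 + sg p.2 * Ee b (-(p.2 / b)) * t)) := dvd_sg_mul_iff.mpr hD
    rw [key] at this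
    exact this
  · rintro ⟨hd, hdiv⟩
    obtain ⟨j0, hj0⟩ := hd
    have hj : (q.2 - p.2) / b = j0 := by rw [hj0, Int.mul_ediv_cancel_left _ hb.ne']
    rw [hj] at hdiv
    have hq1 : q.2 / b = p.2 / b + j0 := by
      have : q.2 = p.2 + b * j0 := by linarith
      rw [this, Int.add_mul_ediv_left _ _ hb.ne']
    have e1 : sg p.2 * sg q.2 = sg (j0 * b) := by
      have h' : p.2 + q.2 = (p.2 + p.2) + j0 * b := by linarith
      rw [← sg_add, h', sg_add, sg_even ⟨p.2, rfl⟩, one_mul]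
    have e2 : Ee b (-(p.2 / b)) = Ee b j0 + sg (j0 * b) * Ee b (-(p.2 / b + j0)) := by
      have h' := Ee_cocycle b j0 (-(p.2 / b + j0))
      rw [show j0 + -(p.2 / b + j0) = -(p.2 / b) by ring] at h'
      exact h'
    have key : sg p.2 * ((q.1 + sg q.2 * Ee b (-(q.2 / b)) * t)
        - (p.1 + sg p.2 * Ee b (-(p.2 / b)) * t))
        = sg p.2 * (q.1 - p.1) - Ee b j0 * t := by
      rw [hq1]
      linear_combination (t * Ee b (-(p.2 / b + j0))) * e1
        - (t * Ee b (-(p.2 / b))) * sg_mul_self p.2 - t * e2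
    have hD : a ∣ (q.1 + sg q.2 * Ee b (-(q.2 / b)) * t)
        - (p.1 + sg p.2 * Ee b (-(p.2 / b)) * t) := by
      rw [← dvd_sg_mul_iff (m := p.2), key]
      exact hdiv
    refine Prod.ext ?_ ?_
    · exact (hfst _ _).mpr hD
    · exact hsnd.mpr ⟨j0, hj0⟩

lemma W_index {a b t : ℤ} (ha : 0 < a) (hb : 0 < b) :
    (W a b t).index = a.toNat * b.toNat := by
  classical
  haveI : NeZero a.toNat := ⟨by omega⟩
  haveI : NeZero b.toNat := ⟨by omega⟩
  have hA : ((a.toNat : ℕ) : ℤ) = a := Int.toNat_of_nonneg ha.le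
  have hB : ((b.toNat : ℕ) : ℤ) = b := Int.toNat_of_nonneg hb.le
  have e : (KB ⧸ W a b t) ≃ (ZMod a.toNat × ZMod b.toNat) := by
    refine Equiv.ofBijective (fun q => Quotient.liftOn' q (cmap a b t) ?_) ⟨?_, ?_⟩
    · intro p q h
      exact (cmap_eq_iff ha hb p q).mpr (QuotientGroup.leftRel_apply.mp h)
    · intro q1 q2
      refine Quotient.inductionOn₂' q1 q2 (fun p q h => ?_)
      exact Quotient.sound' (QuotientGroup.leftRel_apply.mpr ((cmap_eq_iff ha hb p q).mp h))
    · rintro ⟨u, v⟩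
      refine ⟨Quotient.mk'' (mk ((u.val : ℤ)) ((v.val : ℤ))), ?_⟩
      show cmap a b t _ = _
      unfold cmap
      simp only [mk_fst, mk_snd]
      have hv : ((v.val : ℤ)) / b = 0 := by
        apply Int.ediv_eq_zero_of_lt (by positivity)
        have h1 : ((v.val : ℕ) : ℤ) < ((b.toNat : ℕ) : ℤ) := by exact_mod_cast v.val_lt
        rwa [hB] at h1
      rw [hv, neg_zero, Ee_zero, mul_zero, zero_mul, add_zero]
      refine Prod.ext ?_ ?_
      · show ((u.val : ℤ) : ZMod a.toNat) = u
        rw [Int.cast_natCast, ZMod.natCast_val, ZMod.cast_id]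
      · show ((v.val : ℤ) : ZMod b.toNat) = v
        rw [Int.cast_natCast, ZMod.natCast_val, ZMod.cast_id]
  rw [Subgroup.index, Nat.card_congr e, Nat.card_prod, Nat.card_zmod, Nat.card_zmod]

end KB

namespace KB

lemma mul_inv_eq (p q : KB) : p * q⁻¹ = mk (p.1 - sg (p.2 - q.2) * q.1) (p.2 - q.2) := by
  rw [← mk_eta p, ← mk_eta q, mk_inv, mk_mul, mk_eq_mk]
  simp only [mk_fst, mk_snd]
  rw [sub_eq_add_neg p.2 q.2, sg_add, sg_neg]
  constructor
  · have := sg_mul_self q.2; nlinarith [sg_mul_self q.2]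
  · ring

lemma exists_param (Δ : Subgroup KB) (h : Δ.FiniteIndex) :
    ∃ a b t : ℤ, 0 < a ∧ 0 < b ∧ 0 ≤ t ∧ t < a ∧ Δ = W a b t := by
  classical
  -- the intersection with the normal line and the projection
  let A' : AddSubgroup ℤ :=
  { carrier := {s | mk s 0 ∈ Δ}
    zero_mem' := by simpa using Δ.one_mem
    add_mem' := by
      intro s s' hs hs'
      have hm := Δ.mul_mem hs hs'
      rw [mk_mul] at hm
      simpa using hm
    neg_mem' := by
      intro s hs
      have hm := Δ.inv_mem hs
      rw [mk_inv] at hm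
      simpa using hm }
  let B' : AddSubgroup ℤ :=
  { carrier := {m | ∃ s, mk s m ∈ Δ}
    zero_mem' := ⟨0, by simpa using Δ.one_mem⟩
    add_mem' := by
      rintro m m' ⟨s, hs⟩ ⟨s', hs'⟩
      exact ⟨s + sg m * s', by rw [← mk_mul]; exact Δ.mul_mem hs hs'⟩
    neg_mem' := by
      rintro m ⟨s, hs⟩
      exact ⟨-(sg m * s), by rw [← mk_inv]; exact Δ.inv_mem hs⟩ }
  have hAmem : ∀ s : ℤ, mk s 0 ∈ Δ ↔ s ∈ A' := fun s => Iff.rfl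
  have hBmem : ∀ m : ℤ, (∃ s, mk s m ∈ Δ) ↔ m ∈ B' := fun m => Iff.rfl
  -- pigeonhole: both subgroups are nontrivial
  have hfin : Finite (KB ⧸ Δ) := Δ.finite_quotient_of_finiteIndex
  obtain ⟨k1, k2, hkne, hkeq⟩ := Finite.exists_ne_map_eq_of_infinite
    (fun k : ℤ => (QuotientGroup.mk (mk k 0) : KB ⧸ Δ))
  have hk : mk (k2 - k1) 0 ∈ Δ := by
    have hm := QuotientGroup.eq.mp hkeq
    rw [inv_mul_eq] at hm
    simpa using hm
  obtain ⟨m1, m2, hmne, hmeq⟩ := Finite.exists_ne_map_eq_of_infinite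
    (fun m : ℤ => (QuotientGroup.mk (mk 0 m) : KB ⧸ Δ))
  have hmm : mk 0 (m2 - m1) ∈ Δ := by
    have hm := QuotientGroup.eq.mp hmeq
    rw [inv_mul_eq] at hm
    simpa using hm
  -- cyclic structure
  obtain ⟨a0, ha0⟩ := Int.subgroup_cyclic A'
  obtain ⟨b0, hb0⟩ := Int.subgroup_cyclic B'
  have hma : ∀ s : ℤ, s ∈ A' ↔ a0 ∣ s := by
    intro s
    rw [ha0, AddSubgroup.mem_closure_singleton]
    constructor
    · rintro ⟨n, hn⟩; exact ⟨n, by rw [← hn, zsmul_eq_mul]; push_cast; ring⟩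
    · rintro ⟨n, hn⟩; exact ⟨n, by rw [zsmul_eq_mul, hn]; push_cast; ring⟩
  have hmb : ∀ m : ℤ, m ∈ B' ↔ b0 ∣ m := by
    intro m
    rw [hb0, AddSubgroup.mem_closure_singleton]
    constructor
    · rintro ⟨n, hn⟩; exact ⟨n, by rw [← hn, zsmul_eq_mul]; push_cast; ring⟩
    · rintro ⟨n, hn⟩; exact ⟨n, by rw [zsmul_eq_mul, hn]; push_cast; ring⟩
  have ha0ne : a0 ≠ 0 := by
    rintro rfl
    have := (hma _).mp hk
    simp at this
    omega
  have hb0ne : b0 ≠ 0 := by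
    rintro rfl
    have := (hmb _).mp ⟨0, hmm⟩
    simp at this
    omega
  set a := |a0| with hadef
  set b := |b0| with hbdef
  have ha : 0 < a := abs_pos.mpr ha0ne
  have hb : 0 < b := abs_pos.mpr hb0ne
  have hA : ∀ s : ℤ, mk s 0 ∈ Δ ↔ a ∣ s := by
    intro s; rw [hAmem, hma, hadef, abs_dvd]
  have hBm : ∀ m : ℤ, (∃ s, mk s m ∈ Δ) ↔ b ∣ m := by
    intro m; rw [hBmem, hmb, hbdef, abs_dvd]
  obtain ⟨t0, ht0⟩ := (hBm b).mpr dvd_rfl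
  set t := t0 % a with htdef
  have ht : 0 ≤ t := Int.emod_nonneg t0 ha.ne'
  have htlt : t < a := Int.emod_lt_of_pos t0 ha
  have htmem : mk t b ∈ Δ := by
    have h1 : mk (t - t0) 0 ∈ Δ := by
      rw [hA]
      refine ⟨-(t0 / a), ?_⟩
      rw [htdef, Int.emod_def]; ring
    have h2 := Δ.mul_mem h1 ht0
    rw [mk_mul] at h2
    simpa using h2
  refine ⟨a, b, t, ha, hb, ht, htlt, ?_⟩
  ext p
  constructor
  · intro hp
    have hm : b ∣ p.2 := (hBm p.2).mp ⟨p.1, by rwa [mk_eta]⟩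
    have hjb : p.2 / b * b = p.2 := Int.ediv_mul_cancel hm
    have hpow : (mk t b) ^ (p.2 / b) ∈ Δ := zpow_mem htmem _
    have hmul : p * ((mk t b) ^ (p.2 / b))⁻¹ ∈ Δ := Δ.mul_mem hp (Δ.inv_mem hpow)
    rw [zpow_mk, mul_inv_eq] at hmul
    simp only [mk_fst, mk_snd, hjb, sub_self, sg_zero, one_mul] at hmul
    obtain ⟨k, hk2⟩ := (hA _).mp hmul
    exact ⟨k, p.2 / b, ext (by simp only [mk_fst]; linarith) (by simp only [mk_snd]; exact hjb.symm)⟩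
  · rintro ⟨k, j, rfl⟩
    have h1 : mk (k * a) 0 ∈ Δ := (hA _).mpr (Dvd.intro_left k rfl)
    have h2 := Δ.mul_mem h1 (zpow_mem htmem j)
    rw [zpow_mk, mk_mul] at h2
    simpa using h2

end KB

namespace KB

@[simp] lemma mul_fst (p q : KB) : (p * q).1 = p.1 + sg p.2 * q.1 := rfl
@[simp] lemma mul_snd (p q : KB) : (p * q).2 = p.2 + q.2 := rfl

lemma mk_a_mem (a b t : ℤ) : mk a 0 ∈ W a b t :=
  ⟨1, 0, by rw [mk_eq_mk]; constructor <;> simp⟩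

lemma mk_t_mem (a b t : ℤ) : mk t b ∈ W a b t :=
  ⟨0, 1, by rw [mk_eq_mk]; constructor <;> simp⟩

lemma snd_dvd {a b t : ℤ} {p : KB} (hp : p ∈ W a b t) : b ∣ p.2 := by
  obtain ⟨k, j, rfl⟩ := hp
  exact Dvd.intro_left j rfl

lemma fst_dvd {a b t : ℤ} (hb : 0 < b) {p : KB} (hp : p ∈ W a b t) (h0 : p.2 = 0) : a ∣ p.1 := by
  obtain ⟨k, j, rfl⟩ := hp
  simp only [mk_snd] at h0
  have hj : j = 0 := by
    rcases mul_eq_zero.mp h0 with h | h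
    · exact h
    · omega
  subst hj
  simp only [mk_fst, Ee_zero, zero_mul, add_zero]
  exact Dvd.intro_left k rfl

lemma W_param_eq {a b t a' b' t' : ℤ} (ha : 0 < a) (hb : 0 < b) (ht : 0 ≤ t) (htl : t < a)
    (ha' : 0 < a') (hb' : 0 < b') (ht' : 0 ≤ t') (htl' : t' < a')
    (h : W a b t = W a' b' t') : a = a' ∧ b = b' ∧ t = t' := by
  have hbb' : b ∣ b' := by
    have hm : mk t' b' ∈ W a b t := by rw [h]; exact mk_t_mem a' b' t'
    simpa using snd_dvd hm
  have hb'b : b' ∣ b := by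
    have hm : mk t b ∈ W a' b' t' := by rw [← h]; exact mk_t_mem a b t
    simpa using snd_dvd hm
  have hbeq : b = b' := Int.dvd_antisymm hb.le hb'.le hbb' hb'b
  have haa' : a ∣ a' := by
    have hm : mk a' 0 ∈ W a b t := by rw [h]; exact mk_a_mem a' b' t'
    simpa using fst_dvd hb hm rfl
  have ha'a : a' ∣ a := by
    have hm : mk a 0 ∈ W a' b' t' := by rw [← h]; exact mk_a_mem a b t
    simpa using fst_dvd hb' hm rfl
  have haeq : a = a' := Int.dvd_antisymm ha.le ha'.le haa' ha'a
  refine ⟨haeq, hbeq, ?_⟩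
  have hm : mk t' b ∈ W a b t := by rw [h, hbeq]; exact mk_t_mem a' b' t'
  obtain ⟨k, j, hkj⟩ := hm
  rw [mk_eq_mk] at hkj
  obtain ⟨h1, h2⟩ := hkj
  have hj1 : j = 1 := by
    have : (j - 1) * b = 0 := by linarith
    rcases mul_eq_zero.mp this with hh | hh
    · omega
    · omega
  subst hj1
  rw [Ee_one, one_mul] at h1
  -- t' = k * a + t, with 0 ≤ t, t' < a
  have hk0 : k = 0 := by
    rcases lt_trichotomy k 0 with hk | hk | hk
    · have : k * a ≤ (-1) * a := mul_le_mul_of_nonneg_right (by omega) ha.le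
      rw [← haeq] at htl'
      linarith
    · exact hk
    · have : (1 : ℤ) * a ≤ k * a := mul_le_mul_of_nonneg_right (by omega) ha.le
      rw [← haeq] at htl'
      linarith
  subst hk0
  omega

lemma comm_transfer {G H : Type*} [Group G] [Group H] (hH : ∀ x y : H, x * y = y * x)
    (e : G ≃* H) : ∀ x y : G, x * y = y * x := fun x y =>
  e.injective (by rw [map_mul, map_mul, hH])

lemma KB_not_comm : ¬ (∀ x y : KB, x * y = y * x) := by
  intro h
  have h2 := h (mk 0 1) (mk 1 0)
  rw [mk_mul, mk_mul, mk_eq_mk] at h2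
  simp at h2

lemma W_odd_not_comm {a b t : ℤ} (ha : 0 < a) (hbo : ¬ Even b) :
    ¬ (∀ x y : ↥(W a b t), x * y = y * x) := by
  intro hcomm
  have h2 := hcomm ⟨mk a 0, mk_a_mem a b t⟩ ⟨mk t b, mk_t_mem a b t⟩
  rw [Subtype.ext_iff] at h2
  have h3 : (mk a 0 * mk t b : KB) = mk t b * mk a 0 := h2
  rw [mk_mul, mk_mul, mk_eq_mk] at h3
  rw [sg_even Even.zero, sg_odd hbo] at h3
  obtain ⟨h4, -⟩ := h3
  omega

/-- Monoid hom `ℤ² →* W a b t` for even `b`. -/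
def evenHom (a b t : ℤ) (hbe : Even b) : Multiplicative (ℤ × ℤ) →* ↥(W a b t) where
  toFun z := ⟨mk ((Multiplicative.toAdd z).1 * a + (Multiplicative.toAdd z).2 * t)
      ((Multiplicative.toAdd z).2 * b),
      ⟨(Multiplicative.toAdd z).1, (Multiplicative.toAdd z).2, by rw [Ee_even hbe]⟩⟩
  map_one' := Subtype.ext (by
    show mk _ _ = (1 : KB)
    simp [toAdd_one, mk_eq_mk])
  map_mul' z w := Subtype.ext (by
    show mk _ _ = (mk _ _ * mk _ _ : KB)
    rw [mk_mul, mk_eq_mk, sg_even (hbe.mul_left _)]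
    simp only [toAdd_mul, Prod.fst_add, Prod.snd_add]
    constructor <;> ring)

/-- For `b` even, `W a b t` is isomorphic to `ℤ²`. -/
noncomputable def WEvenIso {a b t : ℤ} (ha : 0 < a) (hb : 0 < b) (hbe : Even b) :
    Multiplicative (ℤ × ℤ) ≃* ↥(W a b t) := by
  refine MulEquiv.ofBijective (evenHom a b t hbe) ⟨?_, ?_⟩
  · intro z w hzw
    rw [Subtype.ext_iff] at hzw
    have h3 : mk _ _ = mk _ _ := hzw
    rw [mk_eq_mk] at h3
    obtain ⟨h1, h2⟩ := h3
    have e2 : (Multiplicative.toAdd z).2 = (Multiplicative.toAdd w).2 :=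
      mul_right_cancel₀ hb.ne' h2
    rw [e2] at h1
    have e1 : (Multiplicative.toAdd z).1 = (Multiplicative.toAdd w).1 :=
      mul_right_cancel₀ ha.ne' (by linarith)
    show z = w
    have h4 : Multiplicative.toAdd z = Multiplicative.toAdd w := Prod.ext e1 e2
    exact h4
  · rintro ⟨p, k, j, hp⟩
    refine ⟨Multiplicative.ofAdd (k, j), Subtype.ext ?_⟩
    show mk _ _ = p
    rw [hp, mk_eq_mk]
    constructor
    · show k * a + j * t = k * a + Ee b j * t; rw [Ee_even hbe]
    · rfl

/-- Monoid hom `KB →* W a b t` for odd `b`. -/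
def oddHom (a b t : ℤ) (hbo : ¬ Even b) : KB →* ↥(W a b t) where
  toFun p := ⟨mk (p.1 * a + Ee b p.2 * t) (p.2 * b), ⟨p.1, p.2, rfl⟩⟩
  map_one' := Subtype.ext (by
    show mk ((1 : KB).1 * a + Ee b (1 : KB).2 * t) ((1 : KB).2 * b) = (1 : KB)
    rw [show ((1 : KB).1) = 0 from rfl, show ((1 : KB).2) = 0 from rfl]
    simp [mk_eq_mk])
  map_mul' p q := Subtype.ext (by
    show mk _ _ = (mk _ _ * mk _ _ : KB)
    rw [mk_mul, mk_eq_mk, mul_fst, mul_snd, Ee_cocycle b p.2 q.2, sg_mul_odd_right hbo]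
    constructor <;> ring)

/-- For `b` odd, `W a b t` is isomorphic to `KB` itself. -/
noncomputable def WOddIso {a b t : ℤ} (ha : 0 < a) (hb : 0 < b) (hbo : ¬ Even b) :
    KB ≃* ↥(W a b t) := by
  refine MulEquiv.ofBijective (oddHom a b t hbo) ⟨?_, ?_⟩
  · intro p q hpq
    rw [Subtype.ext_iff] at hpq
    have h3 : mk _ _ = mk _ _ := hpq
    rw [mk_eq_mk] at h3
    obtain ⟨h1, h2⟩ := h3
    have e2 : p.2 = q.2 := mul_right_cancel₀ hb.ne' h2
    rw [e2] at h1
    have e1 : p.1 = q.1 := mul_right_cancel₀ ha.ne' (by linarith)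
    exact ext e1 e2
  · rintro ⟨p, k, j, hp⟩
    refine ⟨mk k j, Subtype.ext ?_⟩
    show mk ((mk k j).1 * a + Ee b (mk k j).2 * t) ((mk k j).2 * b) = p
    rw [hp]
    simp only [mk_fst, mk_snd]

end KB


namespace KleinIso

open PresentedGroup

noncomputable def kx : KleinGroup := PresentedGroup.of 0
noncomputable def ky : KleinGroup := PresentedGroup.of 1

lemma hrel : ky * kx * ky⁻¹ * kx = 1 := by
  have h : (PresentedGroup.mk KleinRels)
      (FreeGroup.of 1 * FreeGroup.of 0 * (FreeGroup.of 1)⁻¹ * FreeGroup.of 0) = 1 := by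
    apply (QuotientGroup.eq_one_iff _).mpr
    exact Subgroup.subset_normalClosure rfl
  rw [map_mul, map_mul, map_mul, map_inv] at h
  exact h

lemma conj_x : ky * kx * ky⁻¹ = kx⁻¹ := mul_eq_one_iff_eq_inv.mp hrel

lemma conj_xinv : ky * kx⁻¹ * ky⁻¹ = kx := by
  have h2 : (ky * kx * ky⁻¹)⁻¹ = kx⁻¹⁻¹ := by rw [conj_x]
  rw [inv_inv] at h2
  calc ky * kx⁻¹ * ky⁻¹ = (ky * kx * ky⁻¹)⁻¹ := by group
    _ = kx := h2

lemma conj_x' : ky⁻¹ * kx * ky = kx⁻¹ := by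
  have key : ky * (ky⁻¹ * kx * ky) * ky⁻¹ = ky * kx⁻¹ * ky⁻¹ := by
    have h2 : ky * (ky⁻¹ * kx * ky) * ky⁻¹ = kx := by group
    rw [h2, conj_xinv]
  exact mul_left_cancel (mul_right_cancel key)

lemma conj_x'inv : ky⁻¹ * kx⁻¹ * ky = kx := by
  have key : ky⁻¹ * (kx⁻¹ * ky) = ky⁻¹ * ((ky * kx * ky⁻¹) * ky) := by rw [conj_x]
  calc ky⁻¹ * kx⁻¹ * ky = ky⁻¹ * (kx⁻¹ * ky) := by group
    _ = ky⁻¹ * ((ky * kx * ky⁻¹) * ky) := key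
    _ = kx := by group

lemma conj_zpow (m : ℤ) : ky ^ m * kx * ky ^ (-m) = kx ^ (sg m) := by
  induction m using Int.induction_on with
  | zero => simp
  | succ k ih =>
    have e : ky ^ ((k : ℤ) + 1) * kx * ky ^ (-((k : ℤ) + 1))
        = ky * (ky ^ (k : ℤ) * kx * ky ^ (-(k : ℤ))) * ky⁻¹ := by
      rw [zpow_add_one, zpow_neg, zpow_add_one, mul_inv_rev, ← zpow_neg]
      group
    rw [e, ih]
    by_cases hk : Even (k : ℤ)
    · rw [sg_even hk, sg_odd (by rw [Int.even_iff] at hk ⊢; omega), zpow_one, zpow_neg_one]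
      exact conj_x
    · rw [sg_odd hk, sg_even (by rw [Int.even_iff] at hk ⊢; omega), zpow_neg_one, zpow_one]
      exact conj_xinv
  | pred k ih =>
    have e : ky ^ (-(k : ℤ) - 1) * kx * ky ^ (-(-(k : ℤ) - 1))
        = ky⁻¹ * (ky ^ (-(k : ℤ)) * kx * ky ^ (-(-(k : ℤ)))) * ky := by
      rw [zpow_sub_one]
      rw [show (-(-(k : ℤ) - 1)) = (-(-(k:ℤ))) + 1 by ring, zpow_add_one]
      group
    rw [e, ih, sg_neg]
    by_cases hk : Even (k : ℤ)
    · rw [sg_even hk, sg_odd (by rw [Int.even_iff] at hk ⊢; omega), zpow_one,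
        zpow_neg_one]
      · exact conj_x'
    · rw [sg_odd hk, sg_even (by rw [Int.even_iff] at hk ⊢; omega), zpow_neg_one,
        zpow_one]
      exact conj_x'inv

lemma comm_zpow (m s : ℤ) : ky ^ m * kx ^ s = kx ^ (sg m * s) * ky ^ m := by
  have h2 : kx ^ (sg m * s) = ky ^ m * kx ^ s * ky ^ (-m) := by
    calc kx ^ (sg m * s) = (kx ^ sg m) ^ s := zpow_mul kx (sg m) s
      _ = ((MulAut.conj (ky ^ m)) kx) ^ s := by
          rw [← conj_zpow m, MulAut.conj_apply, zpow_neg]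
      _ = (MulAut.conj (ky ^ m)) (kx ^ s) := (map_zpow _ _ _).symm
      _ = ky ^ m * kx ^ s * ky ^ (-m) := by rw [MulAut.conj_apply, zpow_neg]
  rw [h2]
  group

noncomputable def fwd : KleinGroup →* KB :=
  PresentedGroup.toGroup (f := ![KB.mk 1 0, KB.mk 0 1])
    (by
      rintro r hr
      rw [KleinRels, Set.mem_singleton_iff] at hr
      subst hr
      simp only [map_mul, map_inv, FreeGroup.lift_apply_of]
      simp only [Matrix.cons_val_zero, Matrix.cons_val_one, Matrix.head_cons]
      simp only [KB.mk_inv, KB.mk_mul, KB.one_def, KB.mk_eq_mk]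
      norm_num [sg_one, sg_zero])

@[simp] lemma fwd_kx : fwd kx = KB.mk 1 0 := by
  rw [kx, fwd, PresentedGroup.toGroup.of]
  simp

@[simp] lemma fwd_ky : fwd ky = KB.mk 0 1 := by
  rw [ky, fwd, PresentedGroup.toGroup.of]
  simp

noncomputable def bwd : KB →* KleinGroup where
  toFun p := kx ^ p.1 * ky ^ p.2
  map_one' := by
    show kx ^ ((1 : KB).1) * ky ^ ((1 : KB).2) = 1
    rw [show ((1 : KB).1) = 0 from rfl, show ((1 : KB).2) = 0 from rfl]
    simp
  map_mul' p q := by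
    show kx ^ (p.1 + sg p.2 * q.1) * ky ^ (p.2 + q.2) = _
    rw [zpow_add, zpow_add]
    calc kx ^ p.1 * kx ^ (sg p.2 * q.1) * (ky ^ p.2 * ky ^ q.2)
        = kx ^ p.1 * (kx ^ (sg p.2 * q.1) * ky ^ p.2) * ky ^ q.2 := by group
      _ = kx ^ p.1 * (ky ^ p.2 * kx ^ q.1) * ky ^ q.2 := by rw [← comm_zpow]
      _ = kx ^ p.1 * ky ^ p.2 * (kx ^ q.1 * ky ^ q.2) := by group

lemma bwd_mk (s m : ℤ) : bwd (KB.mk s m) = kx ^ s * ky ^ m := rfl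

lemma fwd_bwd (p : KB) : fwd (bwd p) = p := by
  rw [← KB.mk_eta p, bwd_mk, map_mul, map_zpow, map_zpow, fwd_kx, fwd_ky,
    KB.mk_zpow_zero_right, KB.zpow_mk, KB.mk_mul]
  simp [KB.mk_eq_mk]

noncomputable def iso : KleinGroup ≃* KB := by
  refine MonoidHom.toMulEquiv fwd bwd ?_ ?_
  · apply PresentedGroup.ext
    intro i
    fin_cases i
    · show bwd (fwd kx) = kx
      rw [fwd_kx, bwd_mk]
      simp
    · show bwd (fwd ky) = ky
      rw [fwd_ky, bwd_mk]
      simp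
  · exact MonoidHom.ext fwd_bwd

end KleinIso


section Counting

/-- triples `((a,b),t)` with `a*b = n`, `q (a,b)` and `t < a`. -/
def TriP (n : ℕ) (q : ℕ × ℕ → Prop) [DecidablePred q] : Finset ((ℕ × ℕ) × ℕ) :=
  ((n.divisorsAntidiagonal).filter q).biUnion (fun p => {p} ×ˢ Finset.range p.1)

lemma mem_TriP {n : ℕ} {q : ℕ × ℕ → Prop} [DecidablePred q] {x : (ℕ × ℕ) × ℕ} :
    x ∈ TriP n q ↔ x.1 ∈ n.divisorsAntidiagonal ∧ q x.1 ∧ x.2 < x.1.1 := by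
  simp only [TriP, Finset.mem_biUnion, Finset.mem_filter, Finset.mem_product,
    Finset.mem_singleton, Finset.mem_range]
  constructor
  · rintro ⟨p, ⟨hp, hq⟩, rfl, hr⟩
    exact ⟨hp, hq, hr⟩
  · rintro ⟨hp, hq, hr⟩
    exact ⟨x.1, ⟨hp, hq⟩, rfl, hr⟩

lemma card_TriP (n : ℕ) (q : ℕ × ℕ → Prop) [DecidablePred q] :
    (TriP n q).card = ∑ p ∈ (n.divisorsAntidiagonal).filter q, p.1 := by
  rw [TriP, Finset.card_biUnion]
  · apply Finset.sum_congr rfl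
    intro p _
    rw [Finset.card_product, Finset.card_singleton, Finset.card_range, one_mul]
  · intro p _ p' _ hne
    simp only [Finset.disjoint_left]
    rintro x hx hx'
    rw [Finset.mem_product, Finset.mem_singleton] at hx hx'
    exact hne (hx.1 ▸ hx'.1)

lemma sum_fst_antidiag (n : ℕ) : ∑ p ∈ n.divisorsAntidiagonal, p.1 = sigma1 n := by
  rw [sigma1]
  exact Nat.sum_divisorsAntidiagonal (fun a _ => a)

lemma sum_fst_even (n : ℕ) :
    ∑ p ∈ (n.divisorsAntidiagonal).filter (fun p => Even p.2), p.1 = atDiv sigma1 2 n := by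
  by_cases h2 : 2 ∣ n
  · rw [atDiv, if_pos h2, sigma1, ← Nat.sum_divisorsAntidiagonal (fun a _ => a)]
    refine Finset.sum_nbij' (fun p => (p.1, p.2 / 2)) (fun p => (p.1, 2 * p.2)) ?_ ?_ ?_ ?_ ?_
    · rintro ⟨a, b⟩ hp
      rw [Finset.mem_filter, Nat.mem_divisorsAntidiagonal] at hp
      obtain ⟨⟨hab, hn0⟩, heb⟩ := hp
      rw [Nat.mem_divisorsAntidiagonal]
      obtain ⟨c, rfl⟩ := heb
      constructor
      · show a * ((c + c) / 2) = n / 2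
        have hcc : (c + c) / 2 = c := by omega
        rw [hcc]
        have hn : n = 2 * (a * c) := by rw [← hab]; ring
        omega
      · omega
    · rintro ⟨a, c⟩ hp
      rw [Nat.mem_divisorsAntidiagonal] at hp
      rw [Finset.mem_filter, Nat.mem_divisorsAntidiagonal]
      obtain ⟨hac, hn2⟩ := hp
      dsimp only at hac
      refine ⟨⟨?_, ?_⟩, ⟨c, by ring⟩⟩
      · show a * (2 * c) = n
        have h22 : a * (2 * c) = 2 * (a * c) := by ring
        omega
      · omega
    · rintro ⟨a, b⟩ hp
      rw [Finset.mem_filter, Nat.mem_divisorsAntidiagonal] at hp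
      obtain ⟨⟨hab, hn0⟩, c, rfl⟩ := hp
      show ((a, 2 * ((c + c) / 2)) : ℕ × ℕ) = (a, c + c)
      rw [Prod.mk.injEq]
      omega
    · rintro ⟨a, c⟩ _
      show ((a, 2 * c / 2) : ℕ × ℕ) = (a, c)
      rw [Prod.mk.injEq]
      omega
    · rintro ⟨a, b⟩ _
      rfl
  · rw [atDiv, if_neg h2]
    rw [Finset.filter_eq_empty_iff.mpr, Finset.sum_empty]
    rintro ⟨a, b⟩ hp
    rw [Nat.mem_divisorsAntidiagonal] at hp
    rintro ⟨c, rfl⟩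
    exact h2 ⟨a * c, by rw [← hp.1]; ring⟩

lemma sum_fst_odd (n : ℕ) :
    ∑ p ∈ (n.divisorsAntidiagonal).filter (fun p => ¬ Even p.2), p.1
      = sigma1 n - atDiv sigma1 2 n := by
  have h := Finset.sum_filter_add_sum_filter_not n.divisorsAntidiagonal
    (fun p => Even p.2) (fun p => p.1)
  rw [sum_fst_even, sum_fst_antidiag] at h
  omega

lemma atDiv_le (n : ℕ) : atDiv sigma1 2 n ≤ sigma1 n := by
  have h := Finset.sum_filter_add_sum_filter_not n.divisorsAntidiagonal
    (fun p => Even p.2) (fun p => p.1)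
  rw [sum_fst_even, sum_fst_antidiag] at h
  omega

end Counting

section MainCount

open KB

lemma pos_pair {A B n : ℕ} (h : A * B = n) (hn : n ≠ 0) : 0 < A ∧ 0 < B :=
  ⟨Nat.pos_of_ne_zero (fun h0 => hn (by rw [← h, h0, zero_mul])),
   Nat.pos_of_ne_zero (fun h0 => hn (by rw [← h, h0, mul_zero]))⟩

lemma pos_fst_int {n : ℕ} {x : (ℕ × ℕ) × ℕ} (hd : x.1 ∈ n.divisorsAntidiagonal) :
    (0 : ℤ) < (x.1.1 : ℤ) := by
  rw [Nat.mem_divisorsAntidiagonal] at hd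
  exact_mod_cast (pos_pair hd.1 hd.2).1

lemma pos_snd_int {n : ℕ} {x : (ℕ × ℕ) × ℕ} (hd : x.1 ∈ n.divisorsAntidiagonal) :
    (0 : ℤ) < (x.1.2 : ℤ) := by
  rw [Nat.mem_divisorsAntidiagonal] at hd
  exact_mod_cast (pos_pair hd.1 hd.2).2

lemma Wnat_index {n : ℕ} {x : (ℕ × ℕ) × ℕ} (hd : x.1 ∈ n.divisorsAntidiagonal) :
    (W (x.1.1 : ℤ) (x.1.2 : ℤ) (x.2 : ℤ)).index = n := by
  rw [W_index (pos_fst_int hd) (pos_snd_int hd), Int.toNat_natCast, Int.toNat_natCast]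
  exact (Nat.mem_divisorsAntidiagonal.mp hd).1

lemma Wnat_isoZ2 {n : ℕ} {x : (ℕ × ℕ) × ℕ} (hd : x.1 ∈ n.divisorsAntidiagonal)
    (he : Even x.1.2) :
    Nonempty (↥(W (x.1.1 : ℤ) (x.1.2 : ℤ) (x.2 : ℤ)) ≃* Multiplicative (ℤ × ℤ)) :=
  ⟨(WEvenIso (pos_fst_int hd) (pos_snd_int hd) (Int.even_coe_nat _ |>.mpr he)).symm⟩

lemma Wnat_isoKB {n : ℕ} {x : (ℕ × ℕ) × ℕ} (hd : x.1 ∈ n.divisorsAntidiagonal)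
    (he : ¬ Even x.1.2) :
    Nonempty (↥(W (x.1.1 : ℤ) (x.1.2 : ℤ) (x.2 : ℤ)) ≃* KB) :=
  ⟨(WOddIso (pos_fst_int hd) (pos_snd_int hd)
      (fun hc => he (Int.even_coe_nat _ |>.mp hc))).symm⟩

lemma countZ2 (n : ℕ) (hn : 0 < n) :
    Nat.card {Δ : Subgroup KB // Δ.index = n ∧ Nonempty (Δ ≃* Multiplicative (ℤ × ℤ))}
      = atDiv sigma1 2 n := by
  classical
  rw [← sum_fst_even n, ← card_TriP n (fun p => Even p.2), ← Nat.card_eq_finsetCard]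
  refine Nat.card_congr (Equiv.symm (Equiv.ofBijective
    (fun x => ⟨W ((x : (ℕ × ℕ) × ℕ).1.1 : ℤ) ((x : (ℕ × ℕ) × ℕ).1.2 : ℤ)
        ((x : (ℕ × ℕ) × ℕ).2 : ℤ),
      Wnat_index (mem_TriP.mp x.2).1,
      Wnat_isoZ2 (mem_TriP.mp x.2).1 (mem_TriP.mp x.2).2.1⟩) ⟨?_, ?_⟩))
  · rintro ⟨x, hx⟩ ⟨y, hy⟩ hxy
    have hW := congrArg Subtype.val hxy
    simp only at hW
    obtain ⟨hdx, hex, htx⟩ := mem_TriP.mp hx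
    obtain ⟨hdy, hey, hty⟩ := mem_TriP.mp hy
    obtain ⟨h1, h2, h3⟩ := W_param_eq (pos_fst_int hdx) (pos_snd_int hdx)
      (by positivity) (by exact_mod_cast htx)
      (pos_fst_int hdy) (pos_snd_int hdy)
      (by positivity) (by exact_mod_cast hty) hW
    have e1 : x.1.1 = y.1.1 := by exact_mod_cast h1
    have e2 : x.1.2 = y.1.2 := by exact_mod_cast h2
    have e3 : x.2 = y.2 := by exact_mod_cast h3
    exact Subtype.ext (Prod.ext (Prod.ext e1 e2) e3)
  · rintro ⟨Δ, hidx, ⟨e⟩⟩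
    have hfi : Δ.FiniteIndex := ⟨by rw [hidx]; exact hn.ne'⟩
    obtain ⟨a, b, t, ha, hb, ht, htl, rfl⟩ := exists_param Δ hfi
    have hbe : Even b := by
      by_contra hbo
      exact W_odd_not_comm ha hbo (comm_transfer (fun u v => mul_comm u v) e)
    have habn : a.toNat * b.toNat = n := by rw [← W_index ha hb (t := t), hidx]
    refine ⟨⟨((a.toNat, b.toNat), t.toNat), ?_⟩, ?_⟩
    · rw [mem_TriP]
      refine ⟨?_, ?_, ?_⟩
      · rw [Nat.mem_divisorsAntidiagonal]
        exact ⟨habn, hn.ne'⟩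
      · show Even b.toNat
        rw [← Int.even_coe_nat, Int.toNat_of_nonneg hb.le]
        exact hbe
      · show t.toNat < a.toNat
        omega
    · apply Subtype.ext
      show W ((a.toNat : ℤ)) ((b.toNat : ℤ)) ((t.toNat : ℤ)) = W a b t
      rw [Int.toNat_of_nonneg ha.le, Int.toNat_of_nonneg hb.le, Int.toNat_of_nonneg ht]

lemma countKB (n : ℕ) (hn : 0 < n) :
    Nat.card {Δ : Subgroup KB // Δ.index = n ∧ Nonempty (Δ ≃* KB)}
      = sigma1 n - atDiv sigma1 2 n := by
  classical
  rw [← sum_fst_odd n, ← card_TriP n (fun p => ¬ Even p.2), ← Nat.card_eq_finsetCard]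
  refine Nat.card_congr (Equiv.symm (Equiv.ofBijective
    (fun x => ⟨W ((x : (ℕ × ℕ) × ℕ).1.1 : ℤ) ((x : (ℕ × ℕ) × ℕ).1.2 : ℤ)
        ((x : (ℕ × ℕ) × ℕ).2 : ℤ),
      Wnat_index (mem_TriP.mp x.2).1,
      Wnat_isoKB (mem_TriP.mp x.2).1 (mem_TriP.mp x.2).2.1⟩) ⟨?_, ?_⟩))
  · rintro ⟨x, hx⟩ ⟨y, hy⟩ hxy
    have hW := congrArg Subtype.val hxy
    simp only at hW
    obtain ⟨hdx, hex, htx⟩ := mem_TriP.mp hx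
    obtain ⟨hdy, hey, hty⟩ := mem_TriP.mp hy
    obtain ⟨h1, h2, h3⟩ := W_param_eq (pos_fst_int hdx) (pos_snd_int hdx)
      (by positivity) (by exact_mod_cast htx)
      (pos_fst_int hdy) (pos_snd_int hdy)
      (by positivity) (by exact_mod_cast hty) hW
    have e1 : x.1.1 = y.1.1 := by exact_mod_cast h1
    have e2 : x.1.2 = y.1.2 := by exact_mod_cast h2
    have e3 : x.2 = y.2 := by exact_mod_cast h3
    exact Subtype.ext (Prod.ext (Prod.ext e1 e2) e3)
  · rintro ⟨Δ, hidx, ⟨e⟩⟩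
    have hfi : Δ.FiniteIndex := ⟨by rw [hidx]; exact hn.ne'⟩
    obtain ⟨a, b, t, ha, hb, ht, htl, rfl⟩ := exists_param Δ hfi
    have hbo : ¬ Even b := by
      intro hbe
      have hcomm := comm_transfer (fun u v => mul_comm u v) (WEvenIso (t := t) ha hb hbe).symm
      exact KB_not_comm (comm_transfer hcomm e.symm)
    have habn : a.toNat * b.toNat = n := by rw [← W_index ha hb (t := t), hidx]
    refine ⟨⟨((a.toNat, b.toNat), t.toNat), ?_⟩, ?_⟩
    · rw [mem_TriP]
      refine ⟨?_, ?_, ?_⟩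
      · rw [Nat.mem_divisorsAntidiagonal]
        exact ⟨habn, hn.ne'⟩
      · show ¬ Even b.toNat
        rw [← Int.even_coe_nat, Int.toNat_of_nonneg hb.le]
        exact hbo
      · show t.toNat < a.toNat
        omega
    · apply Subtype.ext
      show W ((a.toNat : ℤ)) ((b.toNat : ℤ)) ((t.toNat : ℤ)) = W a b t
      rw [Int.toNat_of_nonneg ha.le, Int.toNat_of_nonneg hb.le, Int.toNat_of_nonneg ht]

end MainCount

section Transfer

variable {G G' H H' : Type*} [Group G] [Group G'] [Group H] [Group H']

lemma map_index_eq (e : G ≃* G') (Δ : Subgroup G) :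
    (Δ.map (e : G →* G')).index = Δ.index :=
  Subgroup.index_map_eq Δ e.surjective
    (by rw [(MonoidHom.ker_eq_bot_iff _).mpr e.injective]; exact bot_le)

lemma map_map_symm (e : G ≃* G') (Δ : Subgroup G) :
    (Δ.map (e : G →* G')).map (e.symm : G' →* G) = Δ := by
  ext x
  simp only [Subgroup.mem_map]
  constructor
  · rintro ⟨y, ⟨z, hz, rfl⟩, rfl⟩
    simpa using hz
  · intro hx
    exact ⟨e x, ⟨x, hx, rfl⟩, by simp⟩

noncomputable def subgroupsEquiv (e : G ≃* G') (eh : H ≃* H') (n : ℕ) :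
    {Δ : Subgroup G // Δ.index = n ∧ Nonempty (Δ ≃* H)}
      ≃ {Δ : Subgroup G' // Δ.index = n ∧ Nonempty (Δ ≃* H')} where
  toFun Δ := ⟨Δ.1.map (e : G →* G'),
    by rw [map_index_eq]; exact Δ.2.1,
    Δ.2.2.map (fun i => ((e.subgroupMap Δ.1).symm.trans i).trans eh)⟩
  invFun Δ' := ⟨Δ'.1.map (e.symm : G' →* G),
    by rw [map_index_eq]; exact Δ'.2.1,
    Δ'.2.2.map (fun i => ((e.symm.subgroupMap Δ'.1).symm.trans i).trans eh.symm)⟩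
  left_inv Δ := Subtype.ext (map_map_symm e Δ.1)
  right_inv Δ' := Subtype.ext (by
    have h := map_map_symm e.symm Δ'.1
    rwa [MulEquiv.symm_symm] at h)

lemma card_congr_subgroups (e : G ≃* G') (eh : H ≃* H') (n : ℕ) :
    Nat.card {Δ : Subgroup G // Δ.index = n ∧ Nonempty (Δ ≃* H)}
      = Nat.card {Δ : Subgroup G' // Δ.index = n ∧ Nonempty (Δ ≃* H')} :=
  Nat.card_congr (subgroupsEquiv e eh n)

end Transfer


/-- Theorem 5 (subgroup count part) for the Klein bottle group `Γ = ⟨x,y | yxy⁻¹=x⁻¹⟩`: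
every finite-index subgroup of `Γ` is isomorphic to `Γ` or to `ℤ²`; the number of index-`n`
subgroups isomorphic to `ℤ²` is `σ₁(n/2)` and the number of those isomorphic to `Γ` is
`σ₁(n) − σ₁(n/2)`. -/
theorem klein_bottle_subgroups :
    (∀ Δ : Subgroup KleinGroup, Δ.FiniteIndex →
      Nonempty (Δ ≃* KleinGroup) ∨ Nonempty (Δ ≃* Z2)) ∧
    (∀ n : ℕ, 0 < n →
      numSubgroupsIso KleinGroup Z2 n = atDiv sigma1 2 n ∧
      (numSubgroupsIso KleinGroup KleinGroup n : ℤ) =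
        (sigma1 n : ℤ) - (atDiv sigma1 2 n : ℤ)) := by
  constructor
  · intro Δ hΔ
    have hfi : (Δ.map (KleinIso.iso : KleinGroup →* KB)).FiniteIndex :=
      ⟨by rw [map_index_eq]; exact hΔ.index_ne_zero⟩
    obtain ⟨a, b, t, ha, hb, ht, htl, hW⟩ := KB.exists_param _ hfi
    by_cases hbe : Even b
    · exact Or.inr ⟨((KleinIso.iso.subgroupMap Δ).trans (MulEquiv.subgroupCongr hW)).trans
        (KB.WEvenIso ha hb hbe).symm⟩
    · exact Or.inl ⟨(((KleinIso.iso.subgroupMap Δ).trans (MulEquiv.subgroupCongr hW)).trans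
        (KB.WOddIso ha hb hbe).symm).trans KleinIso.iso.symm⟩
  · intro n hn
    constructor
    · rw [numSubgroupsIso,
        card_congr_subgroups KleinIso.iso (MulEquiv.refl (Multiplicative (ℤ × ℤ))) n,
        countZ2 n hn]
    · rw [numSubgroupsIso, card_congr_subgroups KleinIso.iso KleinIso.iso n,
        countKB n hn, Nat.cast_sub (atDiv_le n)]
end

section
/- The groups π₁(B₃) and π₁(B₄) are torsion-free: neither contains a nontrivial element of finite order. -/
open Finset

/-- Old Mathlib's `Monoid.IsTorsionFree` (removed): no nontrivial element has finite order. -/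
def Monoid.IsTorsionFree (G : Type*) [Monoid G] : Prop :=
  ∀ g : G, g ≠ 1 → ¬IsOfFinOrder g

namespace PiTF

def sgn (n : ℤ) : ℤ := if Even n then 1 else -1
def par (n : ℤ) : ℤ := if Even n then 0 else 1
def dd (b c : ℤ) : ℤ := if Even c then 0 else par b

lemma sgn_even {n : ℤ} (h : Even n) : sgn n = 1 := if_pos h
lemma dd_even {b c : ℤ} (h : Even c) : dd b c = 0 := if_pos h
lemma sgn_add_one (n : ℤ) : sgn (n + 1) = -sgn n := by
  by_cases h : Even n <;> simp [sgn, Int.even_add_one, h]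
lemma sgn_sub_one (n : ℤ) : sgn (n - 1) = -sgn n := by
  by_cases h : Even n <;> simp [sgn, Int.even_sub_one, h]

variable {G : Type*} [Group G]

lemma zpow_eq (a : G) {m n : ℤ} (h : m = n) : a ^ m = a ^ n := by rw [h]

lemma conj_hom {g a b : G} (h : g * a * g⁻¹ = b) (n : ℤ) : g * a ^ n = b ^ n * g := by
  have h2 : g * a ^ n * g⁻¹ = b ^ n := by rw [← h, conj_zpow]
  rw [← h2]; group

lemma conj_inv {g a : G} (h : g * a * g⁻¹ = a⁻¹) : g⁻¹ * a * g⁻¹⁻¹ = a⁻¹ := by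
  rw [inv_inv]
  have h2 : g⁻¹ * a⁻¹ * g = a := by rw [← h]; group
  have h3 := congrArg (fun w : G => w⁻¹) h2
  simp only [mul_inv_rev, inv_inv] at h3
  rw [← h3]; group

lemma swap_pow {g a : G} (h : g * a * g⁻¹ = a⁻¹) :
    ∀ n m : ℤ, g ^ n * a ^ m = a ^ (sgn n * m) * g ^ n := by
  have key : ∀ m : ℤ, g * a ^ m = a ^ (-m) * g := by
    intro m
    have h1 := conj_hom h m
    rwa [inv_zpow' a m] at h1
  have key' : ∀ m : ℤ, g⁻¹ * a ^ m = a ^ (-m) * g⁻¹ := by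
    intro m
    have h1 := conj_hom (conj_inv h) m
    rwa [inv_zpow' a m] at h1
  intro n
  induction n using Int.induction_on with
  | zero => intro m; simp [sgn]
  | succ k ih =>
      intro m
      calc g ^ ((k : ℤ) + 1) * a ^ m = g ^ (k : ℤ) * (g * a ^ m) := by
            rw [zpow_add_one]; group
        _ = g ^ (k : ℤ) * (a ^ (-m) * g) := by rw [key]
        _ = (g ^ (k : ℤ) * a ^ (-m)) * g := by group
        _ = (a ^ (sgn (k : ℤ) * (-m)) * g ^ (k : ℤ)) * g := by rw [ih]
        _ = a ^ (sgn (k : ℤ) * (-m)) * g ^ ((k : ℤ) + 1) := by group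
        _ = a ^ (sgn ((k : ℤ) + 1) * m) * g ^ ((k : ℤ) + 1) := by
            rw [zpow_eq a (show sgn (k : ℤ) * (-m) = sgn ((k : ℤ) + 1) * m by
              rw [sgn_add_one]; ring)]
  | pred k ih =>
      intro m
      calc g ^ (-(k : ℤ) - 1) * a ^ m = g ^ (-(k : ℤ)) * (g⁻¹ * a ^ m) := by
            rw [zpow_sub_one]; group
        _ = g ^ (-(k : ℤ)) * (a ^ (-m) * g⁻¹) := by rw [key']
        _ = (g ^ (-(k : ℤ)) * a ^ (-m)) * g⁻¹ := by group
        _ = (a ^ (sgn (-(k : ℤ)) * (-m)) * g ^ (-(k : ℤ))) * g⁻¹ := by rw [ih]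
        _ = a ^ (sgn (-(k : ℤ)) * (-m)) * g ^ (-(k : ℤ) - 1) := by group
        _ = a ^ (sgn (-(k : ℤ) - 1) * m) * g ^ (-(k : ℤ) - 1) := by
            rw [zpow_eq a (show sgn (-(k : ℤ)) * (-m) = sgn (-(k : ℤ) - 1) * m by
              rw [sgn_sub_one]; ring)]


section Generic
variable {G : Type*} [Group G] {x y z : G} {t : ℤ}

lemma y1x (hy : y * x * y⁻¹ = x⁻¹) (a : ℤ) : y * x ^ a = x ^ (-a) * y := by
  have h1 := conj_hom hy a; rwa [inv_zpow' x a] at h1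

lemma yInvx (hy : y * x * y⁻¹ = x⁻¹) (a : ℤ) : y⁻¹ * x ^ a = x ^ (-a) * y⁻¹ := by
  have h1 := conj_hom (conj_inv hy) a; rwa [inv_zpow' x a] at h1

lemma L_pow (hy : y * x * y⁻¹ = x⁻¹) :
    ∀ b : ℤ, (x ^ t * y⁻¹) ^ b = x ^ (t * par b) * y ^ (-b) := by
  have hyx := swap_pow hy
  intro b
  induction b using Int.induction_on with
  | zero => simp [par]
  | succ k ih =>
      calc (x ^ t * y⁻¹) ^ ((k : ℤ) + 1) = (x ^ t * y⁻¹) ^ (k : ℤ) * (x ^ t * y⁻¹) := by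
            rw [zpow_add_one]
        _ = x ^ (t * par (k : ℤ)) * (y ^ (-(k : ℤ)) * x ^ t) * y⁻¹ := by rw [ih]; group
        _ = x ^ (t * par (k : ℤ)) * (x ^ (sgn (-(k : ℤ)) * t) * y ^ (-(k : ℤ))) * y⁻¹ := by
            rw [hyx]
        _ = x ^ (t * par (k : ℤ) + sgn (-(k : ℤ)) * t) * y ^ (-((k : ℤ) + 1)) := by group
        _ = x ^ (t * par ((k : ℤ) + 1)) * y ^ (-((k : ℤ) + 1)) := by
            rw [zpow_eq x (show t * par (k : ℤ) + sgn (-(k : ℤ)) * t = t * par ((k : ℤ) + 1) by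
              by_cases h : Even (k : ℤ) <;> simp only [Int.even_coe_nat] at h <;>
                simp [par, sgn, Int.even_add_one, h, even_neg] <;> ring)]
  | pred k ih =>
      have hinv : (x ^ t * y⁻¹)⁻¹ = x ^ t * y := by
        have h1 := y1x hy (-t)
        rw [mul_inv_rev, inv_inv, ← zpow_neg]
        rw [h1]; rw [neg_neg]
      calc (x ^ t * y⁻¹) ^ (-(k : ℤ) - 1) = (x ^ t * y⁻¹) ^ (-(k : ℤ)) * (x ^ t * y) := by
            rw [zpow_sub_one, hinv]
        _ = x ^ (t * par (-(k : ℤ))) * (y ^ (-(-(k : ℤ))) * x ^ t) * y := by rw [ih]; group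
        _ = x ^ (t * par (-(k : ℤ))) * (x ^ (sgn (-(-(k : ℤ))) * t) * y ^ (-(-(k : ℤ)))) * y := by
            rw [hyx]
        _ = x ^ (t * par (-(k : ℤ)) + sgn ((k : ℤ)) * t) * y ^ (-(-(k : ℤ) - 1)) := by
            rw [neg_neg]; group
        _ = x ^ (t * par (-(k : ℤ) - 1)) * y ^ (-(-(k : ℤ) - 1)) := by
            rw [zpow_eq x (show t * par (-(k : ℤ)) + sgn ((k : ℤ)) * t = t * par (-(k : ℤ) - 1) by
              by_cases h : Even (k : ℤ) <;> simp only [Int.even_coe_nat] at h <;>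
                simp [par, sgn, Int.even_sub_one, h, even_neg] <;> ring)]

lemma z1y (hy : y * x * y⁻¹ = x⁻¹) (hzy : z * y * z⁻¹ = x ^ t * y⁻¹) (b : ℤ) :
    z * y ^ b = x ^ (t * par b) * y ^ (-b) * z := by
  have h1 := conj_hom hzy b
  rwa [L_pow hy b] at h1

lemma zInv_conj_y (hy : y * x * y⁻¹ = x⁻¹) (hz : z * x * z⁻¹ = x⁻¹)
    (hzy : z * y * z⁻¹ = x ^ t * y⁻¹) : z⁻¹ * y * z⁻¹⁻¹ = x ^ t * y⁻¹ := by
  rw [inv_inv]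
  have h2 : z⁻¹ * (x ^ t * y⁻¹) * z = y := by rw [← hzy]; group
  have h3 : z⁻¹ * x ^ t = x ^ (-t) * z⁻¹ := by
    have h1 := conj_hom (conj_inv hz) t; rwa [inv_zpow' x t] at h1
  have h4 : x ^ (-t) * (z⁻¹ * (y⁻¹ * z)) = y := by
    calc x ^ (-t) * (z⁻¹ * (y⁻¹ * z)) = (x ^ (-t) * z⁻¹) * (y⁻¹ * z) := by group
      _ = (z⁻¹ * x ^ t) * (y⁻¹ * z) := by rw [h3]
      _ = z⁻¹ * (x ^ t * y⁻¹) * z := by group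
      _ = y := h2
  have h5 : z⁻¹ * (y⁻¹ * z) = x ^ t * y := by
    calc z⁻¹ * (y⁻¹ * z) = x ^ t * (x ^ (-t) * (z⁻¹ * (y⁻¹ * z))) := by group
      _ = x ^ t * y := by rw [h4]
  have h7 : y⁻¹ * x ^ (-t) = x ^ t * y⁻¹ := by
    have := yInvx hy (-t); rwa [neg_neg] at this
  calc z⁻¹ * y * z = (z⁻¹ * (y⁻¹ * z))⁻¹ := by group
    _ = (x ^ t * y)⁻¹ := by rw [h5]
    _ = y⁻¹ * x ^ (-t) := by group
    _ = x ^ t * y⁻¹ := h7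

lemma zInv_y (hy : y * x * y⁻¹ = x⁻¹) (hz : z * x * z⁻¹ = x⁻¹)
    (hzy : z * y * z⁻¹ = x ^ t * y⁻¹) (b : ℤ) :
    z⁻¹ * y ^ b = x ^ (t * par b) * y ^ (-b) * z⁻¹ := by
  have h1 := conj_hom (zInv_conj_y hy hz hzy) b
  rwa [L_pow hy b] at h1

lemma z_swap_y (hy : y * x * y⁻¹ = x⁻¹) (hz : z * x * z⁻¹ = x⁻¹)
    (hzy : z * y * z⁻¹ = x ^ t * y⁻¹) :
    ∀ c b : ℤ, z ^ c * y ^ b = x ^ (t * dd b c) * y ^ (sgn c * b) * z ^ c := by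
  have hzx := swap_pow hz
  intro c
  induction c using Int.induction_on with
  | zero => intro b; simp [dd, sgn]
  | succ k ih =>
      intro b
      calc z ^ ((k : ℤ) + 1) * y ^ b = z ^ (k : ℤ) * (z * y ^ b) := by
            rw [zpow_add_one]; group
        _ = z ^ (k : ℤ) * (x ^ (t * par b) * y ^ (-b) * z) := by rw [z1y hy hzy]
        _ = (z ^ (k : ℤ) * x ^ (t * par b)) * (y ^ (-b)) * z := by group
        _ = (x ^ (sgn (k : ℤ) * (t * par b)) * z ^ (k : ℤ)) * (y ^ (-b)) * z := by rw [hzx]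
        _ = x ^ (sgn (k : ℤ) * (t * par b)) * (z ^ (k : ℤ) * y ^ (-b)) * z := by group
        _ = x ^ (sgn (k : ℤ) * (t * par b)) *
              (x ^ (t * dd (-b) (k : ℤ)) * y ^ (sgn (k : ℤ) * (-b)) * z ^ (k : ℤ)) * z := by
            rw [ih]
        _ = x ^ (sgn (k : ℤ) * (t * par b) + t * dd (-b) (k : ℤ)) *
              y ^ (sgn (k : ℤ) * (-b)) * z ^ ((k : ℤ) + 1) := by group
        _ = x ^ (t * dd b ((k : ℤ) + 1)) * y ^ (sgn ((k : ℤ) + 1) * b) * z ^ ((k : ℤ) + 1) := by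
            rw [zpow_eq x (show sgn (k : ℤ) * (t * par b) + t * dd (-b) (k : ℤ)
                  = t * dd b ((k : ℤ) + 1) by
                by_cases h : Even (k : ℤ) <;> simp only [Int.even_coe_nat] at h <;> by_cases hb : Even b <;>
                  simp [dd, par, sgn, Int.even_add_one, h, hb, even_neg] <;> ring),
              zpow_eq y (show sgn (k : ℤ) * (-b) = sgn ((k : ℤ) + 1) * b by
                rw [sgn_add_one]; ring)]
  | pred k ih =>
      intro b
      calc z ^ (-(k : ℤ) - 1) * y ^ b = z ^ (-(k : ℤ)) * (z⁻¹ * y ^ b) := by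
            rw [zpow_sub_one]; group
        _ = z ^ (-(k : ℤ)) * (x ^ (t * par b) * y ^ (-b) * z⁻¹) := by rw [zInv_y hy hz hzy]
        _ = (z ^ (-(k : ℤ)) * x ^ (t * par b)) * (y ^ (-b)) * z⁻¹ := by group
        _ = (x ^ (sgn (-(k : ℤ)) * (t * par b)) * z ^ (-(k : ℤ))) * (y ^ (-b)) * z⁻¹ := by
            rw [hzx]
        _ = x ^ (sgn (-(k : ℤ)) * (t * par b)) * (z ^ (-(k : ℤ)) * y ^ (-b)) * z⁻¹ := by group
        _ = x ^ (sgn (-(k : ℤ)) * (t * par b)) *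
              (x ^ (t * dd (-b) (-(k : ℤ))) * y ^ (sgn (-(k : ℤ)) * (-b)) * z ^ (-(k : ℤ))) * z⁻¹ := by
            rw [ih]
        _ = x ^ (sgn (-(k : ℤ)) * (t * par b) + t * dd (-b) (-(k : ℤ))) *
              y ^ (sgn (-(k : ℤ)) * (-b)) * z ^ (-(k : ℤ) - 1) := by group
        _ = x ^ (t * dd b (-(k : ℤ) - 1)) * y ^ (sgn (-(k : ℤ) - 1) * b) * z ^ (-(k : ℤ) - 1) := by
            rw [zpow_eq x (show sgn (-(k : ℤ)) * (t * par b) + t * dd (-b) (-(k : ℤ))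
                  = t * dd b (-(k : ℤ) - 1) by
                by_cases h : Even (k : ℤ) <;> simp only [Int.even_coe_nat] at h <;> by_cases hb : Even b <;>
                  simp [dd, par, sgn, Int.even_sub_one, h, hb, even_neg] <;> ring),
              zpow_eq y (show sgn (-(k : ℤ)) * (-b) = sgn (-(k : ℤ) - 1) * b by
                rw [sgn_sub_one]; ring)]


lemma prod_formula (hy : y * x * y⁻¹ = x⁻¹) (hz : z * x * z⁻¹ = x⁻¹)
    (hzy : z * y * z⁻¹ = x ^ t * y⁻¹) (a b c a' b' c' : ℤ) :
    (x ^ a * y ^ b * z ^ c) * (x ^ a' * y ^ b' * z ^ c') =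
      x ^ (a + sgn b * (sgn c * a') + sgn b * (t * dd b' c)) * y ^ (b + sgn c * b') *
        z ^ (c + c') := by
  have hzx := swap_pow hz
  have hyx := swap_pow hy
  have hzyb := z_swap_y hy hz hzy
  calc (x ^ a * y ^ b * z ^ c) * (x ^ a' * y ^ b' * z ^ c')
      = x ^ a * y ^ b * ((z ^ c * x ^ a') * (y ^ b' * z ^ c')) := by group
    _ = x ^ a * y ^ b * ((x ^ (sgn c * a') * z ^ c) * (y ^ b' * z ^ c')) := by rw [hzx]
    _ = x ^ a * ((y ^ b * x ^ (sgn c * a')) * ((z ^ c * y ^ b') * z ^ c')) := by group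
    _ = x ^ a * ((x ^ (sgn b * (sgn c * a')) * y ^ b) *
          ((x ^ (t * dd b' c) * y ^ (sgn c * b') * z ^ c) * z ^ c')) := by rw [hyx, hzyb]
    _ = x ^ (a + sgn b * (sgn c * a')) *
          ((y ^ b * x ^ (t * dd b' c)) * (y ^ (sgn c * b') * (z ^ c * z ^ c'))) := by group
    _ = x ^ (a + sgn b * (sgn c * a')) *
          ((x ^ (sgn b * (t * dd b' c)) * y ^ b) * (y ^ (sgn c * b') * (z ^ c * z ^ c'))) := by
        rw [hyx]
    _ = x ^ (a + sgn b * (sgn c * a') + sgn b * (t * dd b' c)) * y ^ (b + sgn c * b') *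
          z ^ (c + c') := by group

lemma pow_even (hy : y * x * y⁻¹ = x⁻¹) (hz : z * x * z⁻¹ = x⁻¹)
    (hzy : z * y * z⁻¹ = x ^ t * y⁻¹) (A B C : ℤ) (hB : Even B) (hC : Even C) :
    ∀ n : ℕ, (x ^ A * y ^ B * z ^ C) ^ n = x ^ ((n : ℤ) * A) * y ^ ((n : ℤ) * B) *
      z ^ ((n : ℤ) * C) := by
  intro n
  induction n with
  | zero => simp
  | succ n ih =>
      have hnB : Even ((n : ℤ) * B) := hB.mul_left _
      have hnC : Even ((n : ℤ) * C) := hC.mul_left _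
      rw [pow_succ, ih, prod_formula hy hz hzy]
      rw [sgn_even hnB, sgn_even hnC, dd_even hnC]
      rw [zpow_eq x (show (n : ℤ) * A + 1 * (1 * A) + 1 * (t * 0) = ((n : ℤ) + 1) * A by ring),
        zpow_eq y (show (n : ℤ) * B + 1 * B = ((n : ℤ) + 1) * B by ring),
        zpow_eq z (show (n : ℤ) * C + C = ((n : ℤ) + 1) * C by ring)]
      push_cast
      rfl

lemma normal_form (hy : y * x * y⁻¹ = x⁻¹) (hz : z * x * z⁻¹ = x⁻¹)
    (hzy : z * y * z⁻¹ = x ^ t * y⁻¹)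
    (hgen : Subgroup.closure ({x, y, z} : Set G) = ⊤) (g : G) :
    ∃ a b c : ℤ, g = x ^ a * y ^ b * z ^ c := by
  have hg : g ∈ Subgroup.closure ({x, y, z} : Set G) := hgen ▸ Subgroup.mem_top g
  induction hg using Subgroup.closure_induction_left with
  | one => exact ⟨0, 0, 0, by simp⟩
  | mul_left w hw u hu ih =>
      obtain ⟨a, b, c, rfl⟩ := ih
      simp only [Set.mem_insert_iff, Set.mem_singleton_iff] at hw
      rcases hw with rfl | rfl | rfl
      · exact ⟨a + 1, b, c, by group⟩
      · refine ⟨-a, b + 1, c, ?_⟩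
        calc w * (x ^ a * w ^ b * z ^ c) = (w * x ^ a) * (w ^ b * z ^ c) := by group
          _ = (x ^ (-a) * w) * (w ^ b * z ^ c) := by rw [y1x hy]
          _ = x ^ (-a) * w ^ (b + 1) * z ^ c := by group
      · refine ⟨-a + t * par b, -b, c + 1, ?_⟩
        calc w * (x ^ a * y ^ b * w ^ c) = (w * x ^ a) * (y ^ b * w ^ c) := by group
          _ = (x ^ (-a) * w) * (y ^ b * w ^ c) := by
              rw [show w * x ^ a = x ^ (-a) * w by
                have h1 := conj_hom hz a; rwa [inv_zpow' x a] at h1]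
          _ = x ^ (-a) * ((w * y ^ b) * w ^ c) := by group
          _ = x ^ (-a) * ((x ^ (t * par b) * y ^ (-b) * w) * w ^ c) := by rw [z1y hy hzy]
          _ = x ^ (-a + t * par b) * y ^ (-b) * w ^ (c + 1) := by group
  | inv_mul_cancel w hw u hu ih =>
      obtain ⟨a, b, c, rfl⟩ := ih
      simp only [Set.mem_insert_iff, Set.mem_singleton_iff] at hw
      rcases hw with rfl | rfl | rfl
      · exact ⟨a - 1, b, c, by group⟩
      · refine ⟨-a, b - 1, c, ?_⟩
        calc w⁻¹ * (x ^ a * w ^ b * z ^ c) = (w⁻¹ * x ^ a) * (w ^ b * z ^ c) := by group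
          _ = (x ^ (-a) * w⁻¹) * (w ^ b * z ^ c) := by rw [yInvx hy]
          _ = x ^ (-a) * w ^ (b - 1) * z ^ c := by group
      · refine ⟨-a + t * par b, -b, c - 1, ?_⟩
        calc w⁻¹ * (x ^ a * y ^ b * w ^ c) = (w⁻¹ * x ^ a) * (y ^ b * w ^ c) := by group
          _ = (x ^ (-a) * w⁻¹) * (y ^ b * w ^ c) := by
              rw [show w⁻¹ * x ^ a = x ^ (-a) * w⁻¹ by
                have h1 := conj_hom (conj_inv hz) a; rwa [inv_zpow' x a] at h1]
          _ = x ^ (-a) * ((w⁻¹ * y ^ b) * w ^ c) := by group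
          _ = x ^ (-a) * ((x ^ (t * par b) * y ^ (-b) * w⁻¹) * w ^ c) := by
              rw [zInv_y hy hz hzy]
          _ = x ^ (-a + t * par b) * y ^ (-b) * w ^ (c - 1) := by group

lemma torsionFree_of (x y z : G) (t : ℤ)
    (hy : y * x * y⁻¹ = x⁻¹) (hz : z * x * z⁻¹ = x⁻¹) (hzy : z * y * z⁻¹ = x ^ t * y⁻¹)
    (hgen : Subgroup.closure ({x, y, z} : Set G) = ⊤)
    (hdet : ∀ A B C : ℤ, Even C → x ^ A * y ^ B * z ^ C = 1 → A = 0 ∧ B = 0 ∧ C = 0) :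
    Monoid.IsTorsionFree G := by
  intro g hg1 hfin
  obtain ⟨a, b, c, hgf⟩ := normal_form hy hz hzy hgen g
  set n : ℕ := orderOf g with hn
  have hpos : 0 < n := hfin.orderOf_pos
  have hgn : g ^ n = 1 := pow_orderOf_eq_one g
  set α : ℤ := a + sgn b * (sgn c * a) + sgn b * (t * dd b c) with hα
  set β : ℤ := b + sgn c * b with hβ
  have h2 : g ^ 2 = x ^ α * y ^ β * z ^ (c + c) := by
    rw [pow_two, hgf, prod_formula hy hz hzy]
  have hβeven : Even β := by
    rcases Int.even_or_odd c with h | h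
    · exact ⟨b, by rw [hβ, sgn_even h]; ring⟩
    · rw [← Int.not_even_iff_odd] at h
      exact ⟨0, by rw [hβ]; simp [sgn, h]⟩
  have hceven : Even (c + c) := ⟨c, rfl⟩
  have h3 : (g ^ 2) ^ n = x ^ ((n : ℤ) * α) * y ^ ((n : ℤ) * β) * z ^ ((n : ℤ) * (c + c)) := by
    rw [h2, pow_even hy hz hzy _ _ _ hβeven hceven]
  have h4 : (g ^ 2) ^ n = 1 := by rw [pow_right_comm, hgn, one_pow]
  have h5 := hdet _ _ _ (hceven.mul_left _) (h3 ▸ h4)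
  have hne : (n : ℤ) ≠ 0 := Int.natCast_ne_zero.mpr hpos.ne'
  have hc0 : c = 0 := by
    rcases mul_eq_zero.mp h5.2.2 with h | h
    · exact absurd h hne
    · omega
  have hβ0 : β = 0 := by
    rcases mul_eq_zero.mp h5.2.1 with h | h
    · exact absurd h hne
    · exact h
  have hb0 : b = 0 := by
    rw [hβ, hc0, sgn_even Even.zero] at hβ0
    omega
  have hα0 : α = 0 := by
    rcases mul_eq_zero.mp h5.1 with h | h
    · exact absurd h hne
    · exact h
  have ha0 : a = 0 := by
    rw [hα, hb0, hc0, sgn_even Even.zero, dd_even Even.zero] at hα0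
    omega
  apply hg1
  rw [hgf, ha0, hb0, hc0]
  simp

end Generic
end PiTF

namespace PiTF

def pX : Equiv.Perm (ℤ × ℤ × ℤ) where
  toFun p := (p.1 + 1, p.2)
  invFun p := (p.1 - 1, p.2)
  left_inv p := by simp
  right_inv p := by simp

def pX2 : Equiv.Perm (ℤ × ℤ × ℤ) where
  toFun p := (p.1 + 2, p.2)
  invFun p := (p.1 - 2, p.2)
  left_inv p := by simp
  right_inv p := by simp

def pY : Equiv.Perm (ℤ × ℤ × ℤ) where
  toFun p := (-p.1, p.2.1 + 1, p.2.2)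
  invFun p := (-p.1, p.2.1 - 1, p.2.2)
  left_inv p := by simp
  right_inv p := by simp

def pZ3 : Equiv.Perm (ℤ × ℤ × ℤ) where
  toFun p := (-p.1, -p.2.1, p.2.2 + 1)
  invFun p := (-p.1, -p.2.1, p.2.2 - 1)
  left_inv p := by simp
  right_inv p := by simp

def pZ4 : Equiv.Perm (ℤ × ℤ × ℤ) where
  toFun p := (1 - p.1, -p.2.1, p.2.2 + 1)
  invFun p := (1 - p.1, -p.2.1, p.2.2 - 1)
  left_inv p := by simp
  right_inv p := by simp

lemma pX_zpow : ∀ (A : ℤ) (a q r : ℤ), (pX ^ A) (a, q, r) = (a + A, q, r) := by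
  intro A
  induction A using Int.induction_on with
  | zero => intro a q r; simp
  | succ k ih =>
      intro a q r
      rw [zpow_add_one, Equiv.Perm.mul_apply, show pX (a, q, r) = (a + 1, q, r) from rfl, ih]
      simp; ring
  | pred k ih =>
      intro a q r
      rw [zpow_sub_one, Equiv.Perm.mul_apply,
        show pX⁻¹ (a, q, r) = (a - 1, q, r) from rfl, ih]
      simp; ring

lemma pX2_zpow : ∀ (A : ℤ) (a q r : ℤ), (pX2 ^ A) (a, q, r) = (a + 2 * A, q, r) := by
  intro A
  induction A using Int.induction_on with
  | zero => intro a q r; simp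
  | succ k ih =>
      intro a q r
      rw [zpow_add_one, Equiv.Perm.mul_apply, show pX2 (a, q, r) = (a + 2, q, r) from rfl, ih]
      simp; ring
  | pred k ih =>
      intro a q r
      rw [zpow_sub_one, Equiv.Perm.mul_apply,
        show pX2⁻¹ (a, q, r) = (a - 2, q, r) from rfl, ih]
      simp; ring

lemma pY_zpow : ∀ (B : ℤ) (q r : ℤ), (pY ^ B) (0, q, r) = (0, q + B, r) := by
  intro B
  induction B using Int.induction_on with
  | zero => intro q r; simp
  | succ k ih =>
      intro q r
      rw [zpow_add_one, Equiv.Perm.mul_apply,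
        show pY ((0 : ℤ), q, r) = (0, q + 1, r) from by simp [pY, Equiv.Perm.inv_def], ih]
      simp; ring
  | pred k ih =>
      intro q r
      rw [zpow_sub_one, Equiv.Perm.mul_apply,
        show pY⁻¹ ((0 : ℤ), q, r) = (0, q - 1, r) from by simp [pY, Equiv.Perm.inv_def], ih]
      simp; ring

lemma pZ3_zpow : ∀ (C : ℤ) (r : ℤ), (pZ3 ^ C) (0, 0, r) = (0, 0, r + C) := by
  intro C
  induction C using Int.induction_on with
  | zero => intro r; simp
  | succ k ih =>
      intro r
      rw [zpow_add_one, Equiv.Perm.mul_apply,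
        show pZ3 ((0 : ℤ), (0 : ℤ), r) = (0, 0, r + 1) from by simp [pZ3, Equiv.Perm.inv_def], ih]
      simp; ring
  | pred k ih =>
      intro r
      rw [zpow_sub_one, Equiv.Perm.mul_apply,
        show pZ3⁻¹ ((0 : ℤ), (0 : ℤ), r) = (0, 0, r - 1) from by simp [pZ3, Equiv.Perm.inv_def], ih]
      simp; ring

lemma pZ4_zpow : ∀ (C : ℤ) (u r : ℤ),
    (pZ4 ^ C) (u, 0, r) = ((if Even C then u else 1 - u), 0, r + C) := by
  intro C
  induction C using Int.induction_on with
  | zero => intro u r; simp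
  | succ k ih =>
      intro u r
      rw [zpow_add_one, Equiv.Perm.mul_apply,
        show pZ4 (u, (0 : ℤ), r) = (1 - u, 0, r + 1) from by simp [pZ4, Equiv.Perm.inv_def], ih]
      by_cases h : Even (k : ℤ) <;> simp only [Int.even_coe_nat] at h <;> simp [Int.even_add_one, h] <;> omega
  | pred k ih =>
      intro u r
      rw [zpow_sub_one, Equiv.Perm.mul_apply,
        show pZ4⁻¹ (u, (0 : ℤ), r) = (1 - u, 0, r - 1) from by simp [pZ4, Equiv.Perm.inv_def], ih]
      by_cases h : Even (-(k : ℤ)) <;> simp only [even_neg, Int.even_coe_nat] at h <;> simp [Int.even_sub_one, h] <;> omega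

end PiTF

namespace PiTF

def f3 : Fin 3 → Equiv.Perm (ℤ × ℤ × ℤ) := ![pX, pY, pZ3]
def f4 : Fin 3 → Equiv.Perm (ℤ × ℤ × ℤ) := ![pX2, pY, pZ4]

lemma hrel3 : ∀ r ∈ B3Rels, FreeGroup.lift f3 r = 1 := by
  intro r hr
  simp only [B3Rels, Set.mem_insert_iff, Set.mem_singleton_iff] at hr
  rcases hr with rfl | rfl | rfl <;>
  · refine Equiv.ext fun p => ?_
    obtain ⟨p1, p2, p3⟩ := p
    simp only [map_mul, map_inv, FreeGroup.lift_apply_of]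
    simp [f3, pX, pY, pZ3, Equiv.Perm.mul_apply, Equiv.Perm.inv_def, Equiv.Perm.one_apply]
    try omega

lemma hrel4 : ∀ r ∈ B4Rels, FreeGroup.lift f4 r = 1 := by
  intro r hr
  simp only [B4Rels, Set.mem_insert_iff, Set.mem_singleton_iff] at hr
  rcases hr with rfl | rfl | rfl <;>
  · refine Equiv.ext fun p => ?_
    obtain ⟨p1, p2, p3⟩ := p
    simp only [map_mul, map_inv, FreeGroup.lift_apply_of]
    simp [f4, pX2, pY, pZ4, Equiv.Perm.mul_apply, Equiv.Perm.inv_def, Equiv.Perm.one_apply]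
    try omega

def phi3 : PiB3 →* Equiv.Perm (ℤ × ℤ × ℤ) := PresentedGroup.toGroup hrel3
def phi4 : PiB4 →* Equiv.Perm (ℤ × ℤ × ℤ) := PresentedGroup.toGroup hrel4

lemma mk_rel3 {r : FreeGroup (Fin 3)} (hr : r ∈ B3Rels) : PresentedGroup.mk B3Rels r = 1 :=
  (QuotientGroup.eq_one_iff r).mpr (Subgroup.subset_normalClosure hr)

lemma mk_rel4 {r : FreeGroup (Fin 3)} (hr : r ∈ B4Rels) : PresentedGroup.mk B4Rels r = 1 :=
  (QuotientGroup.eq_one_iff r).mpr (Subgroup.subset_normalClosure hr)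

lemma mem1_3 : FreeGroup.of 1 * FreeGroup.of 0 * (FreeGroup.of 1)⁻¹ * FreeGroup.of 0 ∈ B3Rels :=
  Set.mem_insert _ _
lemma mem2_3 : FreeGroup.of 2 * FreeGroup.of 0 * (FreeGroup.of 2)⁻¹ * FreeGroup.of 0 ∈ B3Rels :=
  Set.mem_insert_of_mem _ (Set.mem_insert _ _)
lemma mem3_3 : FreeGroup.of 2 * FreeGroup.of 1 * (FreeGroup.of 2)⁻¹ * FreeGroup.of 1 ∈ B3Rels :=
  Set.mem_insert_of_mem _ (Set.mem_insert_of_mem _ rfl)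
lemma mem1_4 : FreeGroup.of 1 * FreeGroup.of 0 * (FreeGroup.of 1)⁻¹ * FreeGroup.of 0 ∈ B4Rels :=
  Set.mem_insert _ _
lemma mem2_4 : FreeGroup.of 2 * FreeGroup.of 0 * (FreeGroup.of 2)⁻¹ * FreeGroup.of 0 ∈ B4Rels :=
  Set.mem_insert_of_mem _ (Set.mem_insert _ _)
lemma mem3_4 : FreeGroup.of 2 * FreeGroup.of 1 * (FreeGroup.of 2)⁻¹ * FreeGroup.of 1 *
    (FreeGroup.of 0)⁻¹ ∈ B4Rels :=
  Set.mem_insert_of_mem _ (Set.mem_insert_of_mem _ rfl)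

lemma hy3 : (PresentedGroup.of 1 : PiB3) * PresentedGroup.of 0 * (PresentedGroup.of 1)⁻¹
    = (PresentedGroup.of 0)⁻¹ := by
  have h : (PresentedGroup.of 1 : PiB3) * PresentedGroup.of 0 * (PresentedGroup.of 1)⁻¹ *
      PresentedGroup.of 0 = 1 := by
    have h0 := mk_rel3 mem1_3
    rwa [map_mul, map_mul, map_mul, map_inv] at h0
  calc (PresentedGroup.of 1 : PiB3) * PresentedGroup.of 0 * (PresentedGroup.of 1)⁻¹
      = ((PresentedGroup.of 1 : PiB3) * PresentedGroup.of 0 * (PresentedGroup.of 1)⁻¹ *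
          PresentedGroup.of 0) * (PresentedGroup.of 0)⁻¹ := by group
    _ = (PresentedGroup.of 0)⁻¹ := by rw [h]; group

lemma hz3 : (PresentedGroup.of 2 : PiB3) * PresentedGroup.of 0 * (PresentedGroup.of 2)⁻¹
    = (PresentedGroup.of 0)⁻¹ := by
  have h : (PresentedGroup.of 2 : PiB3) * PresentedGroup.of 0 * (PresentedGroup.of 2)⁻¹ *
      PresentedGroup.of 0 = 1 := by
    have h0 := mk_rel3 mem2_3
    rwa [map_mul, map_mul, map_mul, map_inv] at h0
  calc (PresentedGroup.of 2 : PiB3) * PresentedGroup.of 0 * (PresentedGroup.of 2)⁻¹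
      = ((PresentedGroup.of 2 : PiB3) * PresentedGroup.of 0 * (PresentedGroup.of 2)⁻¹ *
          PresentedGroup.of 0) * (PresentedGroup.of 0)⁻¹ := by group
    _ = (PresentedGroup.of 0)⁻¹ := by rw [h]; group

lemma hzy3 : (PresentedGroup.of 2 : PiB3) * PresentedGroup.of 1 * (PresentedGroup.of 2)⁻¹
    = (PresentedGroup.of 0 : PiB3) ^ (0 : ℤ) * (PresentedGroup.of 1)⁻¹ := by
  have h : (PresentedGroup.of 2 : PiB3) * PresentedGroup.of 1 * (PresentedGroup.of 2)⁻¹ *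
      PresentedGroup.of 1 = 1 := by
    have h0 := mk_rel3 mem3_3
    rwa [map_mul, map_mul, map_mul, map_inv] at h0
  rw [zpow_zero, one_mul]
  calc (PresentedGroup.of 2 : PiB3) * PresentedGroup.of 1 * (PresentedGroup.of 2)⁻¹
      = ((PresentedGroup.of 2 : PiB3) * PresentedGroup.of 1 * (PresentedGroup.of 2)⁻¹ *
          PresentedGroup.of 1) * (PresentedGroup.of 1)⁻¹ := by group
    _ = (PresentedGroup.of 1)⁻¹ := by rw [h]; group

lemma hy4 : (PresentedGroup.of 1 : PiB4) * PresentedGroup.of 0 * (PresentedGroup.of 1)⁻¹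
    = (PresentedGroup.of 0)⁻¹ := by
  have h : (PresentedGroup.of 1 : PiB4) * PresentedGroup.of 0 * (PresentedGroup.of 1)⁻¹ *
      PresentedGroup.of 0 = 1 := by
    have h0 := mk_rel4 mem1_4
    rwa [map_mul, map_mul, map_mul, map_inv] at h0
  calc (PresentedGroup.of 1 : PiB4) * PresentedGroup.of 0 * (PresentedGroup.of 1)⁻¹
      = ((PresentedGroup.of 1 : PiB4) * PresentedGroup.of 0 * (PresentedGroup.of 1)⁻¹ *
          PresentedGroup.of 0) * (PresentedGroup.of 0)⁻¹ := by group
    _ = (PresentedGroup.of 0)⁻¹ := by rw [h]; group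

lemma hz4 : (PresentedGroup.of 2 : PiB4) * PresentedGroup.of 0 * (PresentedGroup.of 2)⁻¹
    = (PresentedGroup.of 0)⁻¹ := by
  have h : (PresentedGroup.of 2 : PiB4) * PresentedGroup.of 0 * (PresentedGroup.of 2)⁻¹ *
      PresentedGroup.of 0 = 1 := by
    have h0 := mk_rel4 mem2_4
    rwa [map_mul, map_mul, map_mul, map_inv] at h0
  calc (PresentedGroup.of 2 : PiB4) * PresentedGroup.of 0 * (PresentedGroup.of 2)⁻¹
      = ((PresentedGroup.of 2 : PiB4) * PresentedGroup.of 0 * (PresentedGroup.of 2)⁻¹ *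
          PresentedGroup.of 0) * (PresentedGroup.of 0)⁻¹ := by group
    _ = (PresentedGroup.of 0)⁻¹ := by rw [h]; group

lemma hzy4 : (PresentedGroup.of 2 : PiB4) * PresentedGroup.of 1 * (PresentedGroup.of 2)⁻¹
    = (PresentedGroup.of 0 : PiB4) ^ (1 : ℤ) * (PresentedGroup.of 1)⁻¹ := by
  have h : (PresentedGroup.of 2 : PiB4) * PresentedGroup.of 1 * (PresentedGroup.of 2)⁻¹ *
      PresentedGroup.of 1 * (PresentedGroup.of 0)⁻¹ = 1 := by
    have h0 := mk_rel4 mem3_4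
    rwa [map_mul, map_mul, map_mul, map_mul, map_inv, map_inv] at h0
  rw [zpow_one]
  calc (PresentedGroup.of 2 : PiB4) * PresentedGroup.of 1 * (PresentedGroup.of 2)⁻¹
      = ((PresentedGroup.of 2 : PiB4) * PresentedGroup.of 1 * (PresentedGroup.of 2)⁻¹ *
          PresentedGroup.of 1 * (PresentedGroup.of 0)⁻¹) *
          (PresentedGroup.of 0 * (PresentedGroup.of 1)⁻¹) := by group
    _ = PresentedGroup.of 0 * (PresentedGroup.of 1)⁻¹ := by rw [h]; group

lemma hgen3 : Subgroup.closure
    ({PresentedGroup.of 0, PresentedGroup.of 1, PresentedGroup.of 2} : Set PiB3) = ⊤ := by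
  apply top_unique
  rw [← PresentedGroup.closure_range_of B3Rels]
  apply Subgroup.closure_mono
  rintro w ⟨i, rfl⟩
  fin_cases i <;> simp

lemma hgen4 : Subgroup.closure
    ({PresentedGroup.of 0, PresentedGroup.of 1, PresentedGroup.of 2} : Set PiB4) = ⊤ := by
  apply top_unique
  rw [← PresentedGroup.closure_range_of B4Rels]
  apply Subgroup.closure_mono
  rintro w ⟨i, rfl⟩
  fin_cases i <;> simp

lemma det3 (A B C : ℤ) (_ : Even C)
    (h : (PresentedGroup.of 0 : PiB3) ^ A * PresentedGroup.of 1 ^ B *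
      PresentedGroup.of 2 ^ C = 1) : A = 0 ∧ B = 0 ∧ C = 0 := by
  have h2 := congrArg phi3 h
  rw [map_mul, map_mul, map_zpow, map_zpow, map_zpow, map_one] at h2
  rw [show phi3 (PresentedGroup.of 0) = pX from PresentedGroup.toGroup.of hrel3,
    show phi3 (PresentedGroup.of 1) = pY from PresentedGroup.toGroup.of hrel3,
    show phi3 (PresentedGroup.of 2) = pZ3 from PresentedGroup.toGroup.of hrel3] at h2
  have h3 := congrArg (fun σ : Equiv.Perm (ℤ × ℤ × ℤ) => σ ((0 : ℤ), (0 : ℤ), (0 : ℤ))) h2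
  simp only [Equiv.Perm.mul_apply, Equiv.Perm.one_apply] at h3
  rw [pZ3_zpow, pY_zpow, pX_zpow] at h3
  simp only [Prod.mk.injEq] at h3
  omega

lemma det4 (A B C : ℤ) (hC : Even C)
    (h : (PresentedGroup.of 0 : PiB4) ^ A * PresentedGroup.of 1 ^ B *
      PresentedGroup.of 2 ^ C = 1) : A = 0 ∧ B = 0 ∧ C = 0 := by
  have h2 := congrArg phi4 h
  rw [map_mul, map_mul, map_zpow, map_zpow, map_zpow, map_one] at h2
  rw [show phi4 (PresentedGroup.of 0) = pX2 from PresentedGroup.toGroup.of hrel4,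
    show phi4 (PresentedGroup.of 1) = pY from PresentedGroup.toGroup.of hrel4,
    show phi4 (PresentedGroup.of 2) = pZ4 from PresentedGroup.toGroup.of hrel4] at h2
  have h3 := congrArg (fun σ : Equiv.Perm (ℤ × ℤ × ℤ) => σ ((0 : ℤ), (0 : ℤ), (0 : ℤ))) h2
  simp only [Equiv.Perm.mul_apply, Equiv.Perm.one_apply] at h3
  rw [pZ4_zpow, if_pos hC, pY_zpow, pX2_zpow] at h3
  simp only [Prod.mk.injEq] at h3
  omega

end PiTF

/-- The groups `π₁(B₃)` and `π₁(B₄)` are torsion-free. -/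
theorem piB3_piB4_torsion_free :
    Monoid.IsTorsionFree PiB3 ∧ Monoid.IsTorsionFree PiB4 :=
  ⟨PiTF.torsionFree_of (PresentedGroup.of 0) (PresentedGroup.of 1) (PresentedGroup.of 2) 0
      PiTF.hy3 PiTF.hz3 PiTF.hzy3 PiTF.hgen3 PiTF.det3,
    PiTF.torsionFree_of (PresentedGroup.of 0) (PresentedGroup.of 1) (PresentedGroup.of 2) 1
      PiTF.hy4 PiTF.hz4 PiTF.hzy4 PiTF.hgen4 PiTF.det4⟩
end

section
/- Let ℓ : ℤ³ → ℤ³ be the automorphism ℓ(x,y,z) = (−x,y,z). For every positive integer n, the number of subgroups Δ of index n in ℤ³ with ℓ(Δ) = Δ equals σ₂(n) + 3σ₂(n/2) (with the convention that σ₂(n/2) = 0 when n is odd). -/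
open Finset

/-- The automorphism `ℓ(x,y,z) = (−x,y,z)` of `ℤ³`, as an additive homomorphism. -/
def ell : (ℤ × ℤ × ℤ) →+ (ℤ × ℤ × ℤ) :=
  AddMonoidHom.prodMap (negAddMonoidHom : ℤ →+ ℤ) (AddMonoidHom.id (ℤ × ℤ))

section AuxProof
open AddSubgroup


/-- The triangular lattice generator hom. -/
def gen3 (a b c p q r : ℤ) : (ℤ × ℤ × ℤ) →+ (ℤ × ℤ × ℤ) :=
  AddMonoidHom.mk' (fun v => (a * v.1 + p * v.2.1 + q * v.2.2,
    b * v.2.1 + r * v.2.2, c * v.2.2)) (by intro u v; simp [Prod.ext_iff]; refine ⟨by ring, by ring, by ring⟩)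

def Lat3 (a b c p q r : ℤ) : AddSubgroup (ℤ × ℤ × ℤ) := (gen3 a b c p q r).range

lemma mem_Lat3 {a b c p q r x y z : ℤ} :
    (x, y, z) ∈ Lat3 a b c p q r ↔
      ∃ u v w : ℤ, x = a * u + p * v + q * w ∧ y = b * v + r * w ∧ z = c * w := by
  constructor
  · rintro ⟨⟨u, v, w⟩, h⟩
    exact ⟨u, v, w, by simpa [gen3, Prod.ext_iff, eq_comm] using h⟩
  · rintro ⟨u, v, w, h1, h2, h3⟩
    exact ⟨⟨u, v, w⟩, by simp [gen3, Prod.ext_iff, h1, h2, h3]⟩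

def lin3 (s t e : ℤ) (sel : Fin 3) : (ℤ × ℤ × ℤ) →+ ℤ :=
  AddMonoidHom.mk' (fun v => if sel = 0 then v.1 - s * v.2.1 - t * v.2.2
    else if sel = 1 then v.2.1 - e * v.2.2 else v.2.2)
    (by intro u v; dsimp; split_ifs <;> ring)

lemma gen3_injective {a b c : ℤ} (p q r : ℤ) (ha : a ≠ 0) (hb : b ≠ 0) (hc : c ≠ 0) :
    Function.Injective (gen3 a b c p q r) := by
  rintro ⟨u, v, w⟩ ⟨u', v', w'⟩ h
  simp only [gen3, AddMonoidHom.mk'_apply, Prod.ext_iff] at h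
  obtain ⟨h1, h2, h3⟩ := h
  have hw : w = w' := mul_left_cancel₀ hc h3
  subst hw
  have hv : v = v' := mul_left_cancel₀ hb (by linarith)
  subst hv
  have hu : u = u' := mul_left_cancel₀ ha (by linarith)
  simp [hu]

lemma gen3_comp (a b c p q r : ℤ) :
    gen3 a b c p q r =
      ((gen3 1 1 c 0 0 0).comp (gen3 1 b 1 0 0 r)).comp (gen3 a 1 1 p q 0) := by
  refine AddMonoidHom.ext fun v => ?_
  simp only [gen3, AddMonoidHom.comp_apply, AddMonoidHom.mk'_apply, Prod.ext_iff]
  refine ⟨by ring, by ring, by ring⟩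


lemma range_gen3_1 (a p q : ℤ) :
    (gen3 a 1 1 p q 0).range =
      ((Int.castAddHom (ZMod a.natAbs)).comp (lin3 p q 0 0)).ker := by
  ext ⟨x, y, z⟩
  simp only [AddMonoidHom.mem_ker, AddMonoidHom.comp_apply, lin3, AddMonoidHom.mk'_apply,
    Int.coe_castAddHom]
  norm_num [Fin.ext_iff]
  rw [show ((x:ZMod a.natAbs) - p*y - q*z) = ((x - p*y - q*z : ℤ) : ZMod a.natAbs) by push_cast; ring]
  rw [ZMod.intCast_zmod_eq_zero_iff_dvd, Int.natAbs_dvd]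
  rw [show (a ∣ x - p*y - q*z) ↔ ∃ u, x - p*y - q*z = a * u from dvd_iff_exists_eq_mul_left.trans (by constructor <;> (rintro ⟨u,hu⟩; exact ⟨u, by linarith⟩))]
  constructor
  · rintro ⟨u, v, w, h⟩
    simp only [gen3, AddMonoidHom.mk'_apply, Prod.ext_iff] at h
    obtain ⟨h1, h2, h3⟩ := h
    refine ⟨u, ?_⟩
    have hy : v = y := by linarith
    have hz : w = z := by linarith
    subst hy hz
    linarith
  · rintro ⟨u, hu⟩
    refine ⟨u, y, z, ?_⟩
    simp only [gen3, AddMonoidHom.mk'_apply, Prod.ext_iff]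
    refine ⟨by linarith, by ring, by ring⟩

lemma range_gen3_2 (b r : ℤ) :
    (gen3 1 b 1 0 0 r).range =
      ((Int.castAddHom (ZMod b.natAbs)).comp (lin3 0 0 r 1)).ker := by
  ext ⟨x, y, z⟩
  simp only [AddMonoidHom.mem_ker, AddMonoidHom.comp_apply, lin3, AddMonoidHom.mk'_apply,
    Int.coe_castAddHom]
  norm_num [Fin.ext_iff]
  rw [show ((y:ZMod b.natAbs) - r*z) = ((y - r*z : ℤ) : ZMod b.natAbs) by push_cast; ring]
  rw [ZMod.intCast_zmod_eq_zero_iff_dvd, Int.natAbs_dvd]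
  rw [show (b ∣ y - r*z) ↔ ∃ v, y - r*z = b * v from dvd_iff_exists_eq_mul_left.trans (by constructor <;> (rintro ⟨v,hv⟩; exact ⟨v, by linarith⟩))]
  constructor
  · rintro ⟨u, v, w, h⟩
    simp only [gen3, AddMonoidHom.mk'_apply, Prod.ext_iff] at h
    obtain ⟨h1, h2, h3⟩ := h
    refine ⟨v, ?_⟩
    have hz : w = z := by linarith
    subst hz
    linarith
  · rintro ⟨v, hv⟩
    refine ⟨x, v, z, ?_⟩
    simp only [gen3, AddMonoidHom.mk'_apply, Prod.ext_iff]
    refine ⟨by ring, by linarith, by ring⟩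

lemma range_gen3_3 (c : ℤ) :
    (gen3 1 1 c 0 0 0).range =
      ((Int.castAddHom (ZMod c.natAbs)).comp (lin3 0 0 0 2)).ker := by
  ext ⟨x, y, z⟩
  simp only [AddMonoidHom.mem_ker, AddMonoidHom.comp_apply, lin3, AddMonoidHom.mk'_apply,
    Int.coe_castAddHom]
  norm_num [Fin.ext_iff]
  rw [ZMod.intCast_zmod_eq_zero_iff_dvd, Int.natAbs_dvd]
  rw [show (c ∣ z) ↔ ∃ w, z = c * w from dvd_iff_exists_eq_mul_left.trans (by constructor <;> (rintro ⟨w,hw⟩; exact ⟨w, by linarith⟩))]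
  constructor
  · rintro ⟨u, v, w, h⟩
    simp only [gen3, AddMonoidHom.mk'_apply, Prod.ext_iff] at h
    exact ⟨w, h.2.2.symm⟩
  · rintro ⟨w, hw⟩
    refine ⟨x, y, w, ?_⟩
    simp only [gen3, AddMonoidHom.mk'_apply, Prod.ext_iff]
    refine ⟨by ring, by ring, by linarith⟩

lemma index_ker_zmod {m : ℕ} (hm : m ≠ 0) (f : (ℤ × ℤ × ℤ) →+ ZMod m)
    (hf : Function.Surjective f) : f.ker.index = m := by
  rw [AddSubgroup.index_ker, AddMonoidHom.range_eq_top_of_surjective f hf]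
  rw [Nat.card_congr AddSubgroup.topEquiv.toEquiv, Nat.card_zmod]

lemma index_Lat3 {a b c : ℤ} (p q r : ℤ) (ha : a ≠ 0) (hb : b ≠ 0) (hc : c ≠ 0) :
    (Lat3 a b c p q r).index = (a * b * c).natAbs := by
  have h1 : (gen3 a 1 1 p q 0).range.index = a.natAbs := by
    rw [range_gen3_1]
    refine index_ker_zmod (by simpa using ha) _ fun t => ?_
    obtain ⟨x, hx⟩ := ZMod.intCast_surjective t
    exact ⟨(x, 0, 0), by simp [lin3, hx]⟩
  have h2 : (gen3 1 b 1 0 0 r).range.index = b.natAbs := by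
    rw [range_gen3_2]
    refine index_ker_zmod (by simpa using hb) _ fun t => ?_
    obtain ⟨x, hx⟩ := ZMod.intCast_surjective t
    exact ⟨(0, x, 0), by simp [lin3, hx]⟩
  have h3 : (gen3 1 1 c 0 0 0).range.index = c.natAbs := by
    rw [range_gen3_3]
    refine index_ker_zmod (by simpa using hc) _ fun t => ?_
    obtain ⟨x, hx⟩ := ZMod.intCast_surjective t
    refine ⟨(0, 0, x), by simp [lin3, hx]⟩
  have inj2 : Function.Injective (gen3 1 b 1 0 0 r) := gen3_injective _ _ _ one_ne_zero hb one_ne_zero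
  have inj3 : Function.Injective (gen3 1 1 c 0 0 0) := gen3_injective _ _ _ one_ne_zero one_ne_zero hc
  have : Lat3 a b c p q r =
      (((gen3 a 1 1 p q 0).range.map (gen3 1 b 1 0 0 r)).map (gen3 1 1 c 0 0 0)) := by
    rw [Lat3, gen3_comp a b c p q r, AddMonoidHom.range_comp]
    simp [AddSubgroup.map_map]
  rw [this, AddSubgroup.index_map_of_injective _ inj3,
    AddSubgroup.index_map_of_injective _ inj2, h1, h2, h3]
  rw [Int.natAbs_mul, Int.natAbs_mul]

lemma int_subgroup_dvd (H : AddSubgroup ℤ) {m : ℤ} (hm : m ≠ 0) (hmH : m ∈ H) :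
    ∃ c : ℤ, 0 < c ∧ ∀ y : ℤ, y ∈ H ↔ c ∣ y := by
  obtain ⟨a, ha⟩ := Int.subgroup_cyclic H
  have hmem : ∀ y : ℤ, y ∈ H ↔ a ∣ y := by
    intro y
    rw [ha, AddSubgroup.mem_closure_singleton]
    constructor
    · rintro ⟨k, rfl⟩; exact ⟨k, by rw [mul_comm]; rfl⟩
    · rintro ⟨k, rfl⟩; exact ⟨k, by rw [mul_comm]; rfl⟩
  have ha0 : a ≠ 0 := by
    rintro rfl
    exact hm (by simpa using (hmem m).1 hmH)
  refine ⟨|a|, abs_pos.2 ha0, fun y => (hmem y).trans ?_⟩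
  rw [abs_dvd]


def pi3 : (ℤ × ℤ × ℤ) →+ ℤ := (AddMonoidHom.snd ℤ ℤ).comp (AddMonoidHom.snd ℤ (ℤ × ℤ))
def pi2 : (ℤ × ℤ × ℤ) →+ ℤ := (AddMonoidHom.fst ℤ ℤ).comp (AddMonoidHom.snd ℤ (ℤ × ℤ))

lemma smul_mem_lemma (Δ : AddSubgroup (ℤ × ℤ × ℤ)) {g₁ g₂ g₃ : ℤ × ℤ × ℤ}
    (h1 : g₁ ∈ Δ) (h2 : g₂ ∈ Δ) (h3 : g₃ ∈ Δ) (u v w : ℤ) :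
    u • g₁ + v • g₂ + w • g₃ ∈ Δ :=
  Δ.add_mem (Δ.add_mem (Δ.zsmul_mem h1 u) (Δ.zsmul_mem h2 v)) (Δ.zsmul_mem h3 w)

lemma comb_eq (a b c p q r u v w : ℤ) :
    u • ((a:ℤ), (0:ℤ), (0:ℤ)) + v • ((p:ℤ), b, (0:ℤ)) + w • ((q:ℤ), r, c)
      = (a * u + p * v + q * w, b * v + r * w, c * w) := by
  simp [Prod.ext_iff, smul_eq_mul]
  refine ⟨by ring, by ring, by ring⟩

lemma mem_Lat3' {a b c p q r : ℤ} {v : ℤ × ℤ × ℤ} :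
    v ∈ Lat3 a b c p q r ↔
      ∃ s t w : ℤ, v.1 = a * s + p * t + q * w ∧ v.2.1 = b * t + r * w ∧ v.2.2 = c * w := by
  obtain ⟨x, y, z⟩ := v
  exact mem_Lat3

lemma exists_Lat3 (Δ : AddSubgroup (ℤ × ℤ × ℤ)) (hΔ : Δ.index ≠ 0) :
    ∃ a b c p q r : ℤ, 0 < a ∧ 0 < b ∧ 0 < c ∧ 0 ≤ p ∧ p < a ∧ 0 ≤ q ∧ q < a ∧
      0 ≤ r ∧ r < b ∧ Δ = Lat3 a b c p q r := by
  set n : ℤ := (Δ.index : ℤ) with hn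
  have hn0 : n ≠ 0 := by rw [hn]; exact_mod_cast hΔ
  have hsm : ∀ v : ℤ × ℤ × ℤ, n • v ∈ Δ := by
    intro v
    have := Δ.nsmul_index_mem v
    rwa [hn, natCast_zsmul]
  -- the subgroup {x | (x,0,0) ∈ Δ} = aℤ
  obtain ⟨a, ha, hamem⟩ := int_subgroup_dvd (Δ.comap (AddMonoidHom.inl ℤ (ℤ × ℤ))) hn0
    (by
      show ((n:ℤ), (0:ℤ), (0:ℤ)) ∈ Δ
      rw [show ((n:ℤ), (0:ℤ), (0:ℤ)) = n • ((1:ℤ),(0:ℤ),(0:ℤ)) by simp]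
      exact hsm _)
  have haΔ : ∀ x : ℤ, (x, (0:ℤ), (0:ℤ)) ∈ Δ ↔ a ∣ x := by
    intro x
    rw [← hamem x]
    simp [AddSubgroup.mem_comap]
    exact Iff.rfl
  have haG : (a, (0:ℤ), (0:ℤ)) ∈ Δ := (haΔ a).2 dvd_rfl
  -- the subgroup of z-values = cℤ
  obtain ⟨c, hc, hcmem⟩ := int_subgroup_dvd (Δ.map pi3) hn0
    ⟨((0:ℤ),(0:ℤ),n), by rw [show ((0:ℤ), (0:ℤ), (n:ℤ)) = n • ((0:ℤ),(0:ℤ),(1:ℤ)) by simp]; exact hsm _, rfl⟩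
  obtain ⟨⟨q₀, r₀, c'⟩, hg3mem0, hc'⟩ := (hcmem c).2 dvd_rfl
  have hcc : c' = c := hc'
  have hg3mem : (q₀, r₀, c) ∈ Δ := by rw [← hcc]; exact hg3mem0
  have hzdvd : ∀ v : ℤ × ℤ × ℤ, v ∈ Δ → c ∣ v.2.2 := by
    intro v hv
    exact (hcmem v.2.2).1 ⟨v, hv, rfl⟩
  -- the subgroup {y | ∃ x, (x,y,0) ∈ Δ} = bℤ
  obtain ⟨b, hb, hbmem⟩ := int_subgroup_dvd ((Δ ⊓ pi3.ker).map pi2) hn0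
    ⟨((0:ℤ),n,(0:ℤ)), ⟨by rw [show ((0:ℤ), (n:ℤ), (0:ℤ)) = n • ((0:ℤ),(1:ℤ),(0:ℤ)) by simp]; exact hsm _, rfl⟩, rfl⟩
  obtain ⟨⟨p₀, b', z'⟩, ⟨hg2mem0, hz0⟩, hb'⟩ := (hbmem b).2 dvd_rfl
  have hbb : b' = b := hb'
  have hzz : z' = 0 := hz0
  have hg2mem : (p₀, b, (0:ℤ)) ∈ Δ := by rw [← hbb, ← hzz]; exact hg2mem0
  have hydvd : ∀ v : ℤ × ℤ × ℤ, v ∈ Δ → v.2.2 = 0 → b ∣ v.2.1 := by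
    intro v hv hz
    exact (hbmem v.2.1).1 ⟨v, ⟨hv, hz⟩, rfl⟩
  -- reduce the representatives
  set p := p₀ % a with hp
  have hpΔ : ((p:ℤ), b, (0:ℤ)) ∈ Δ := by
    have h := Δ.sub_mem hg2mem (Δ.zsmul_mem haG (p₀ / a))
    have : (p₀, b, (0:ℤ)) - (p₀ / a) • (a, (0:ℤ), (0:ℤ)) = (p, b, (0:ℤ)) := by
      simp [Prod.ext_iff, smul_eq_mul, hp]
      rw [Int.emod_def]; ring
    rwa [this] at h
  set r := r₀ % b with hr
  set q₁ := q₀ - r₀ / b * p with hq₁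
  have hq₁Δ : ((q₁:ℤ), r, c) ∈ Δ := by
    have h := Δ.sub_mem hg3mem (Δ.zsmul_mem hpΔ (r₀ / b))
    have : (q₀, r₀, c) - (r₀ / b) • (p, b, (0:ℤ)) = (q₁, r, c) := by
      simp [Prod.ext_iff, smul_eq_mul, hq₁, hr]
      rw [Int.emod_def]; ring
    rwa [this] at h
  set q := q₁ % a with hq
  have hqΔ : ((q:ℤ), r, c) ∈ Δ := by
    have h := Δ.sub_mem hq₁Δ (Δ.zsmul_mem haG (q₁ / a))
    have : (q₁, r, c) - (q₁ / a) • (a, (0:ℤ), (0:ℤ)) = (q, r, c) := by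
      simp [Prod.ext_iff, smul_eq_mul, hq]
      rw [Int.emod_def]; ring
    rwa [this] at h
  refine ⟨a, b, c, p, q, r, ha, hb, hc, Int.emod_nonneg _ (ne_of_gt ha), Int.emod_lt_of_pos _ ha,
    Int.emod_nonneg _ (ne_of_gt ha), Int.emod_lt_of_pos _ ha,
    Int.emod_nonneg _ (ne_of_gt hb), Int.emod_lt_of_pos _ hb, ?_⟩
  apply le_antisymm
  · -- Δ ≤ Lat3
    intro v hv
    obtain ⟨x, y, z⟩ := v
    obtain ⟨w, hw⟩ : c ∣ z := hzdvd _ hv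
    have h1 : (x - w * q, y - w * r, (0:ℤ)) ∈ Δ := by
      have h := Δ.sub_mem hv (Δ.zsmul_mem hqΔ w)
      have e : (x, y, z) - w • ((q:ℤ), r, c) = (x - w * q, y - w * r, (0:ℤ)) := by
        simp [Prod.ext_iff, smul_eq_mul]
        rw [hw]; ring
      rwa [e] at h
    obtain ⟨t, ht⟩ : b ∣ y - w * r := hydvd _ h1 rfl
    have h2 : (x - w * q - t * p, (0:ℤ), (0:ℤ)) ∈ Δ := by
      have h := Δ.sub_mem h1 (Δ.zsmul_mem hpΔ t)
      have e : (x - w * q, y - w * r, (0:ℤ)) - t • ((p:ℤ), b, (0:ℤ))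
          = (x - w * q - t * p, (0:ℤ), (0:ℤ)) := by
        simp [Prod.ext_iff, smul_eq_mul]
        rw [ht]; ring
      rwa [e] at h
    obtain ⟨s, hs⟩ : a ∣ x - w * q - t * p := (haΔ _).1 h2
    rw [mem_Lat3]
    exact ⟨s, t, w, by linarith, by linarith, by linarith [hw]⟩
  · -- Lat3 ≤ Δ
    intro v hv
    rw [mem_Lat3'] at hv
    obtain ⟨s, t, w, h1, h2, h3⟩ := hv
    have : v = s • ((a:ℤ), (0:ℤ), (0:ℤ)) + t • ((p:ℤ), b, (0:ℤ)) + w • ((q:ℤ), r, c) := by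
      rw [comb_eq]
      exact Prod.ext h1 (Prod.ext h2 h3)
    rw [this]
    exact smul_mem_lemma Δ haG hpΔ hqΔ s t w

lemma emod_eq_emod_of_dvd_sub {a p p' : ℤ} (h : a ∣ p - p') : p % a = p' % a :=
  Int.ModEq.symm (Int.modEq_iff_dvd.2 (by simpa using h))

lemma eq_of_dvd_sub_of_lt {a p p' : ℤ} (h : a ∣ p - p') (hp0 : 0 ≤ p) (hpa : p < a)
    (hp0' : 0 ≤ p') (hpa' : p' < a) : p = p' := by
  have := emod_eq_emod_of_dvd_sub h
  rwa [Int.emod_eq_of_lt hp0 hpa, Int.emod_eq_of_lt hp0' hpa'] at this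

lemma Lat3_inj {a b c p q r a' b' c' p' q' r' : ℤ}
    (ha : 0 < a) (hb : 0 < b) (hc : 0 < c) (hp0 : 0 ≤ p) (hpa : p < a) (hq0 : 0 ≤ q)
    (hqa : q < a) (hr0 : 0 ≤ r) (hrb : r < b)
    (ha' : 0 < a') (hb' : 0 < b') (hc' : 0 < c') (hp0' : 0 ≤ p') (hpa' : p' < a')
    (hq0' : 0 ≤ q') (hqa' : q' < a') (hr0' : 0 ≤ r') (hrb' : r' < b')
    (h : Lat3 a b c p q r = Lat3 a' b' c' p' q' r') :
    a = a' ∧ b = b' ∧ c = c' ∧ p = p' ∧ q = q' ∧ r = r' := by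
  -- memberships of generators in the other lattice
  have m1 : ((a:ℤ), (0:ℤ), (0:ℤ)) ∈ Lat3 a' b' c' p' q' r' := by
    rw [← h, mem_Lat3]; exact ⟨1, 0, 0, by ring, by ring, by ring⟩
  have m2 : ((p:ℤ), b, (0:ℤ)) ∈ Lat3 a' b' c' p' q' r' := by
    rw [← h, mem_Lat3]; exact ⟨0, 1, 0, by ring, by ring, by ring⟩
  have m3 : ((q:ℤ), r, c) ∈ Lat3 a' b' c' p' q' r' := by
    rw [← h, mem_Lat3]; exact ⟨0, 0, 1, by ring, by ring, by ring⟩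
  have m1' : ((a':ℤ), (0:ℤ), (0:ℤ)) ∈ Lat3 a b c p q r := by
    rw [h, mem_Lat3]; exact ⟨1, 0, 0, by ring, by ring, by ring⟩
  have m2' : ((p':ℤ), b', (0:ℤ)) ∈ Lat3 a b c p q r := by
    rw [h, mem_Lat3]; exact ⟨0, 1, 0, by ring, by ring, by ring⟩
  have m3' : ((q':ℤ), r', c') ∈ Lat3 a b c p q r := by
    rw [h, mem_Lat3]; exact ⟨0, 0, 1, by ring, by ring, by ring⟩
  rw [mem_Lat3] at m1 m2 m3 m1' m2' m3'
  -- c = c'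
  obtain ⟨s3, t3, w3, e1, e2, e3⟩ := m3
  obtain ⟨s3', t3', w3', e1', e2', e3'⟩ := m3'
  have hcc : c = c' := by
    refine Int.dvd_antisymm (le_of_lt hc) (le_of_lt hc') ⟨w3', e3'⟩ ⟨w3, e3⟩
  -- b = b'
  obtain ⟨s2, t2, w2, f1, f2, f3⟩ := m2
  obtain ⟨s2', t2', w2', f1', f2', f3'⟩ := m2'
  have hw2 : w2 = 0 := by
    have := f3.symm
    exact (mul_eq_zero.1 this).resolve_left (ne_of_gt hc') |>.symm ▸ rfl
  have hw2' : w2' = 0 := by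
    rcases mul_eq_zero.1 f3'.symm with h0 | h0
    · exact absurd h0 (ne_of_gt hc)
    · exact h0
  have hbb : b = b' := by
    refine Int.dvd_antisymm (le_of_lt hb) (le_of_lt hb') ⟨t2', by rw [f2', hw2']; ring⟩
      ⟨t2, by rw [f2, hw2]; ring⟩
  -- a = a'
  obtain ⟨s1, t1, w1, g1, g2, g3⟩ := m1
  obtain ⟨s1', t1', w1', g1', g2', g3'⟩ := m1'
  have hw1 : w1 = 0 := by
    rcases mul_eq_zero.1 g3.symm with h0 | h0
    · exact absurd h0 (ne_of_gt hc')
    · exact h0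
  have ht1 : t1 = 0 := by
    rw [hw1] at g2
    rcases mul_eq_zero.1 (by linarith : b' * t1 = 0) with h0 | h0
    · exact absurd h0 (ne_of_gt hb')
    · exact h0
  have hw1' : w1' = 0 := by
    rcases mul_eq_zero.1 g3'.symm with h0 | h0
    · exact absurd h0 (ne_of_gt hc)
    · exact h0
  have ht1' : t1' = 0 := by
    rw [hw1'] at g2'
    rcases mul_eq_zero.1 (by linarith : b * t1' = 0) with h0 | h0
    · exact absurd h0 (ne_of_gt hb)
    · exact h0
  have haa : a = a' := by
    rw [hw1, ht1] at g1
    rw [hw1', ht1'] at g1'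
    exact Int.dvd_antisymm (le_of_lt ha) (le_of_lt ha') ⟨s1', by rw [g1']; ring⟩
      ⟨s1, by rw [g1]; ring⟩
  subst haa hbb hcc
  -- p = p'
  have ht2 : t2 = 1 := by
    rw [hw2] at f2
    have : b * t2 = b * 1 := by linarith
    exact mul_left_cancel₀ (ne_of_gt hb) this
  have hpp : p = p' := by
    rw [hw2, ht2] at f1
    exact eq_of_dvd_sub_of_lt ⟨s2, by rw [f1]; ring⟩ hp0 hpa hp0' hpa'
  -- r = r' and q = q'
  have hw3 : w3 = 1 := by
    have : c * w3 = c * 1 := by linarith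
    exact mul_left_cancel₀ (ne_of_gt hc) this
  have hrr : r = r' := by
    rw [hw3] at e2
    exact eq_of_dvd_sub_of_lt ⟨t3, by rw [e2]; ring⟩ hr0 hrb hr0' hrb'
  have ht3 : t3 = 0 := by
    rw [hw3, ← hrr] at e2
    rcases mul_eq_zero.1 (by linarith : b * t3 = 0) with h0 | h0
    · exact absurd h0 (ne_of_gt hb)
    · exact h0
  have hqq : q = q' := by
    rw [hw3, ht3] at e1
    exact eq_of_dvd_sub_of_lt ⟨s3, by rw [e1]; ring⟩ hq0 hqa hq0' hqa'
  exact ⟨rfl, rfl, rfl, hpp, hqq, hrr⟩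

lemma ell_apply (x y z : ℤ) : ell (x, y, z) = (-x, y, z) := rfl

lemma ell_ell (v : ℤ × ℤ × ℤ) : ell (ell v) = v := by
  obtain ⟨x, y, z⟩ := v; simp [ell_apply]

lemma map_ell_Lat3 {a b c p q r : ℤ}
    (ha : 0 < a) (hb : 0 < b) (hc : 0 < c) :
    (Lat3 a b c p q r).map ell = Lat3 a b c p q r ↔ a ∣ 2 * p ∧ a ∣ 2 * q := by
  constructor
  · intro h
    have m2 : ((p:ℤ), b, (0:ℤ)) ∈ Lat3 a b c p q r := by
      rw [mem_Lat3]; exact ⟨0, 1, 0, by ring, by ring, by ring⟩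
    have m3 : ((q:ℤ), r, c) ∈ Lat3 a b c p q r := by
      rw [mem_Lat3]; exact ⟨0, 0, 1, by ring, by ring, by ring⟩
    have e2 : ((-p:ℤ), b, (0:ℤ)) ∈ Lat3 a b c p q r := by
      rw [← h]; exact ⟨(p, b, 0), m2, ell_apply p b 0⟩
    have e3 : ((-q:ℤ), r, c) ∈ Lat3 a b c p q r := by
      rw [← h]; exact ⟨(q, r, c), m3, ell_apply q r c⟩
    rw [mem_Lat3] at e2 e3
    obtain ⟨s, t, w, f1, f2, f3⟩ := e2
    have hw : w = 0 := by
      rcases mul_eq_zero.1 f3.symm with h0 | h0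
      · exact absurd h0 (ne_of_gt hc)
      · exact h0
    have ht : t = 1 := by
      rw [hw] at f2
      have : b * t = b * 1 := by linarith
      exact mul_left_cancel₀ (ne_of_gt hb) this
    constructor
    · rw [hw, ht] at f1
      exact ⟨-s, by linarith⟩
    · obtain ⟨s', t', w', g1, g2, g3⟩ := e3
      have hw' : w' = 1 := by
        have : c * w' = c * 1 := by linarith
        exact mul_left_cancel₀ (ne_of_gt hc) this
      have ht' : t' = 0 := by
        rw [hw'] at g2
        rcases mul_eq_zero.1 (by linarith : b * t' = 0) with h0 | h0
        · exact absurd h0 (ne_of_gt hb)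
        · exact h0
      rw [hw', ht'] at g1
      exact ⟨-s', by linarith⟩
  · rintro ⟨⟨k1, hk1⟩, ⟨k2, hk2⟩⟩
    have hsub : ∀ v ∈ Lat3 a b c p q r, ell v ∈ Lat3 a b c p q r := by
      rintro ⟨x, y, z⟩ hv
      rw [mem_Lat3] at hv
      obtain ⟨s, t, w, h1, h2, h3⟩ := hv
      rw [ell_apply, mem_Lat3]
      refine ⟨-s - k1 * t - k2 * w, t, w, ?_, h2, h3⟩
      rw [h1]; ring_nf; linear_combination (-t) * hk1 + (-w) * hk2
    apply le_antisymm
    · rintro x ⟨v, hv, rfl⟩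
      exact hsub v hv
    · intro v hv
      exact ⟨ell v, hsub v hv, ell_ell v⟩

def cntF (a : ℕ) : Finset ℕ := (Finset.range a).filter (fun p => a ∣ 2 * p)

lemma cntF_card {a : ℕ} (ha : 0 < a) : (cntF a).card = if 2 ∣ a then 2 else 1 := by
  by_cases h2 : 2 ∣ a
  · obtain ⟨k, rfl⟩ := h2
    have hk : 0 < k := by omega
    have : cntF (2 * k) = {0, k} := by
      ext p
      simp only [cntF, Finset.mem_filter, Finset.mem_range, Finset.mem_insert,
        Finset.mem_singleton]
      constructor
      · rintro ⟨hlt, hdvd⟩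
        have hkp : k ∣ p := (mul_dvd_mul_iff_left (two_ne_zero)).1 hdvd
        obtain ⟨j, rfl⟩ := hkp
        rcases Nat.lt_or_ge j 2 with hj | hj
        · interval_cases j <;> omega
        · exfalso
          have : k * 2 ≤ k * j := Nat.mul_le_mul_left k hj
          omega
      · rintro (rfl | rfl)
        · exact ⟨by omega, ⟨0, by ring⟩⟩
        · exact ⟨by omega, ⟨1, by ring⟩⟩
    rw [this, if_pos ⟨k, rfl⟩]
    rw [Finset.card_insert_of_notMem (by simp; omega), Finset.card_singleton]
  · have hodd : Nat.Coprime a 2 := by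
      have hd := Nat.gcd_dvd_right a 2
      have hl := Nat.gcd_dvd_left a 2
      rcases (Nat.dvd_prime Nat.prime_two).1 hd with h1 | h1
      · exact h1
      · exact absurd (h1 ▸ hl) h2
    have : cntF a = {0} := by
      ext p
      simp only [cntF, Finset.mem_filter, Finset.mem_range, Finset.mem_singleton]
      constructor
      · rintro ⟨hlt, hdvd⟩
        have : a ∣ p := (Nat.Coprime.dvd_of_dvd_mul_left hodd hdvd)
        obtain ⟨j, rfl⟩ := this
        rcases Nat.eq_zero_or_pos j with rfl | hj
        · simp
        · exfalso
          have : a * 1 ≤ a * j := Nat.mul_le_mul_left a hj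
          omega
      · rintro rfl
        exact ⟨ha, ⟨0, by ring⟩⟩
    rw [this, if_neg h2, Finset.card_singleton]

def pqrF (a b : ℕ) : Finset (ℕ × ℕ × ℕ) := cntF a ×ˢ cntF a ×ˢ Finset.range b

lemma pqrF_card {a b : ℕ} (ha : 0 < a) :
    (pqrF a b).card = (if 2 ∣ a then 2 else 1) * ((if 2 ∣ a then 2 else 1) * b) := by
  simp [pqrF, Finset.card_product, cntF_card ha]

def FF (n : ℕ) : Finset ((ℕ × ℕ × ℕ) × (ℕ × ℕ × ℕ)) :=
  n.divisorsAntidiagonal.biUnion fun x =>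
    x.2.divisorsAntidiagonal.biUnion fun y =>
      ({(x.1, y.1, y.2)} : Finset (ℕ × ℕ × ℕ)) ×ˢ pqrF x.1 y.1

def PP (n : ℕ) (t : (ℕ × ℕ × ℕ) × (ℕ × ℕ × ℕ)) : Prop :=
  t.1.1 * (t.1.2.1 * t.1.2.2) = n ∧ t.2.1 < t.1.1 ∧ t.2.2.1 < t.1.1 ∧ t.2.2.2 < t.1.2.1 ∧
    t.1.1 ∣ 2 * t.2.1 ∧ t.1.1 ∣ 2 * t.2.2.1

lemma mem_FF {n : ℕ} (hn : n ≠ 0) (t : (ℕ × ℕ × ℕ) × (ℕ × ℕ × ℕ)) :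
    t ∈ FF n ↔ PP n t := by
  obtain ⟨⟨a, b, c⟩, p, q, r⟩ := t
  simp only [FF, Finset.mem_biUnion, Nat.mem_divisorsAntidiagonal, Finset.mem_product,
    Finset.mem_singleton, pqrF, cntF, Finset.mem_filter, Finset.mem_range, PP]
  constructor
  · rintro ⟨⟨a', m⟩, ⟨hm, -⟩, ⟨b', c'⟩, ⟨hm2, -⟩, ⟨h1, hpq⟩⟩
    simp only [Prod.ext_iff] at h1
    obtain ⟨rfl, rfl, rfl⟩ := h1
    refine ⟨by rw [← hm, ← hm2], ?_⟩
    simp only [Finset.mem_product, Finset.mem_filter, Finset.mem_range] at hpq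
    exact ⟨hpq.1.1, hpq.2.1.1, hpq.2.2, hpq.1.2, hpq.2.1.2⟩
  · rintro ⟨habc, hp, hq, hr, hdp, hdq⟩
    refine ⟨(a, b * c), ⟨habc, hn⟩, (b, c), ⟨rfl, ?_⟩, rfl, ?_⟩
    · show b * c ≠ 0
      intro h; apply hn; rw [← habc, h, mul_zero]
    · simp only [Finset.mem_product, Finset.mem_filter, Finset.mem_range]
      exact ⟨⟨hp, hdp⟩, ⟨hq, hdq⟩, hr⟩

lemma FF_card {n : ℕ} (hn : n ≠ 0) :
    (FF n).card = ∑ x ∈ n.divisorsAntidiagonal, ∑ y ∈ x.2.divisorsAntidiagonal,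
      (if 2 ∣ x.1 then 2 else 1) * ((if 2 ∣ x.1 then 2 else 1) * y.1) := by
  have hmem : ∀ (x : ℕ × ℕ) (y : ℕ × ℕ) (t : (ℕ × ℕ × ℕ) × (ℕ × ℕ × ℕ)),
      t ∈ ({(x.1, y.1, y.2)} : Finset (ℕ × ℕ × ℕ)) ×ˢ pqrF x.1 y.1 →
      t.1 = (x.1, y.1, y.2) := by
    intro x y t ht
    rw [Finset.mem_product, Finset.mem_singleton] at ht
    exact ht.1
  rw [FF, Finset.card_biUnion]
  · refine Finset.sum_congr rfl fun x hx => ?_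
    have hx1 : 0 < x.1 := by
      rw [Nat.mem_divisorsAntidiagonal] at hx
      rcases Nat.eq_zero_or_pos x.1 with h | h
      · exact absurd (by rw [← hx.1, h, zero_mul]) hx.2
      · exact h
    rw [Finset.card_biUnion]
    · refine Finset.sum_congr rfl fun y hy => ?_
      rw [Finset.card_product, Finset.card_singleton, one_mul, pqrF_card hx1]
    · intro y hy y' hy' hne
      simp only [Function.onFun, Finset.disjoint_left]
      intro t ht ht'
      have e1 := hmem x y t ht
      have e2 := hmem x y' t ht'
      apply hne
      rw [Finset.mem_coe, Nat.mem_divisorsAntidiagonal] at hy hy'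
      have : y.1 = y'.1 ∧ y.2 = y'.2 := by
        rw [e1] at e2
        simpa [Prod.ext_iff] using e2
      exact Prod.ext this.1 this.2
  · intro x hx x' hx' hne
    simp only [Function.onFun, Finset.disjoint_left]
    intro t ht ht'
    rw [Finset.mem_biUnion] at ht ht'
    obtain ⟨y, hy, hty⟩ := ht
    obtain ⟨y', hy', hty'⟩ := ht'
    have e1 := hmem x y t hty
    have e2 := hmem x' y' t hty'
    rw [Nat.mem_divisorsAntidiagonal] at hy hy'
    apply hne
    have h11 : x.1 = x'.1 := by
      rw [e1] at e2
      rw [Prod.mk.injEq, Prod.mk.injEq] at e2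
      exact e2.1
    have h22 : x.2 = x'.2 := by
      rw [← hy.1, ← hy'.1]
      rw [e1] at e2
      rw [Prod.mk.injEq, Prod.mk.injEq] at e2
      rw [e2.2.1, e2.2.2]
    exact Prod.ext h11 h22

lemma sum_ba (n : ℕ) :
    ∑ x ∈ n.divisorsAntidiagonal, ∑ y ∈ x.2.divisorsAntidiagonal, y.1 = sigma2 n := by
  rw [sigma2, Finset.sum_sigma', Finset.sum_sigma']
  refine Finset.sum_nbij' (fun z => ⟨(z.2.1, z.1.1 * z.2.2), (z.1.1, z.2.2)⟩)
    (fun z => ⟨(z.2.1, z.1.1 * z.2.2), (z.1.1, z.2.2)⟩) ?_ ?_ ?_ ?_ ?_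
  · rintro ⟨⟨a, m⟩, ⟨b, c⟩⟩ hz
    simp only [Finset.mem_sigma, Nat.mem_divisorsAntidiagonal] at hz ⊢
    obtain ⟨⟨h1, h2⟩, h3, h4⟩ := hz
    refine ⟨⟨by rw [← h1, ← h3]; ring, h2⟩, trivial, ?_⟩
    intro h0
    apply h2
    rw [← h1, ← h3]
    rcases Nat.mul_eq_zero.1 h0 with h | h <;> simp [h]
  · rintro ⟨⟨a, m⟩, ⟨b, c⟩⟩ hz
    simp only [Finset.mem_sigma, Nat.mem_divisorsAntidiagonal] at hz ⊢
    obtain ⟨⟨h1, h2⟩, h3, h4⟩ := hz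
    refine ⟨⟨by rw [← h1, ← h3]; ring, h2⟩, trivial, ?_⟩
    intro h0
    apply h2
    rw [← h1, ← h3]
    rcases Nat.mul_eq_zero.1 h0 with h | h <;> simp [h]
  · rintro ⟨⟨a, m⟩, ⟨b, c⟩⟩ hz
    simp only [Finset.mem_sigma, Nat.mem_divisorsAntidiagonal] at hz
    obtain ⟨⟨h1, h2⟩, h3, h4⟩ := hz
    subst h3
    rfl
  · rintro ⟨⟨a, m⟩, ⟨b, c⟩⟩ hz
    simp only [Finset.mem_sigma, Nat.mem_divisorsAntidiagonal] at hz
    obtain ⟨⟨h1, h2⟩, h3, h4⟩ := hz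
    subst h3
    rfl
  · rintro ⟨⟨a, m⟩, ⟨b, c⟩⟩ hz
    rfl

lemma FF_card_eq {n : ℕ} (hn : n ≠ 0) :
    (FF n).card = sigma2 n + 3 * atDiv sigma2 2 n := by
  rw [FF_card hn]
  have step : ∀ x ∈ n.divisorsAntidiagonal,
      (∑ y ∈ x.2.divisorsAntidiagonal,
        (if 2 ∣ x.1 then 2 else 1) * ((if 2 ∣ x.1 then 2 else 1) * y.1))
      = (∑ y ∈ x.2.divisorsAntidiagonal, y.1) +
        (if 2 ∣ x.1 then 3 * ∑ y ∈ x.2.divisorsAntidiagonal, y.1 else 0) := by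
    intro x _
    by_cases h2 : 2 ∣ x.1
    · simp only [if_pos h2]
      rw [Finset.mul_sum]
      rw [← Finset.sum_add_distrib]
      refine Finset.sum_congr rfl fun y _ => by ring
    · simp only [if_neg h2]
      simp
  rw [Finset.sum_congr rfl step, Finset.sum_add_distrib, sum_ba]
  congr 1
  by_cases hn2 : 2 ∣ n
  · rw [← Finset.sum_filter]
    rw [atDiv, if_pos hn2]
    have : ∑ x ∈ n.divisorsAntidiagonal.filter (fun x => 2 ∣ x.1),
        (3 * ∑ y ∈ x.2.divisorsAntidiagonal, y.1)
        = ∑ z ∈ (n / 2).divisorsAntidiagonal, (3 * ∑ y ∈ z.2.divisorsAntidiagonal, y.1) := by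
      refine Finset.sum_nbij' (fun x => (x.1 / 2, x.2)) (fun z => (2 * z.1, z.2))
        ?_ ?_ ?_ ?_ ?_
      · rintro ⟨a, m⟩ hx
        simp only [Finset.mem_filter, Nat.mem_divisorsAntidiagonal] at hx ⊢
        obtain ⟨⟨h1, h2⟩, k, rfl⟩ := hx
        have hd : 2 * k / 2 = k := Nat.mul_div_cancel_left k (by norm_num)
        rw [hd]
        constructor
        · rw [← h1, mul_assoc, Nat.mul_div_cancel_left _ (by norm_num : 0 < 2)]
        · intro h0
          apply h2
          omega
      · rintro ⟨a, m⟩ hz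
        simp only [Finset.mem_filter, Nat.mem_divisorsAntidiagonal] at hz ⊢
        obtain ⟨h1, h2⟩ := hz
        refine ⟨⟨?_, hn⟩, ⟨a, rfl⟩⟩
        rw [mul_assoc, h1, Nat.mul_div_cancel' hn2]
      · rintro ⟨a, m⟩ hx
        simp only [Finset.mem_filter, Nat.mem_divisorsAntidiagonal] at hx
        have : 2 ∣ a := hx.2
        have : 2 * (a / 2) = a := by omega
        simp [this]
      · rintro ⟨a, m⟩ _
        simp [Nat.mul_div_cancel_left _ (by norm_num : 0 < 2)]
      · rintro ⟨a, m⟩ _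
        rfl
    rw [this, ← Finset.mul_sum, sum_ba]
  · rw [atDiv, if_neg hn2, mul_zero]
    refine Finset.sum_eq_zero fun x hx => ?_
    rw [Nat.mem_divisorsAntidiagonal] at hx
    rw [if_neg]
    intro h2
    exact hn2 (by rw [← hx.1]; exact Dvd.dvd.mul_right h2 x.2)

lemma PP_pos {n : ℕ} (hn : n ≠ 0) {t : (ℕ × ℕ × ℕ) × (ℕ × ℕ × ℕ)} (h : PP n t) :
    0 < t.1.1 ∧ 0 < t.1.2.1 ∧ 0 < t.1.2.2 := by
  obtain ⟨h1, -⟩ := h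
  refine ⟨?_, ?_, ?_⟩
  · rcases Nat.eq_zero_or_pos t.1.1 with h0 | h0
    · exfalso; apply hn; rw [← h1, h0]; ring
    · exact h0
  · rcases Nat.eq_zero_or_pos t.1.2.1 with h0 | h0
    · exfalso; apply hn; rw [← h1, h0]; ring
    · exact h0
  · rcases Nat.eq_zero_or_pos t.1.2.2 with h0 | h0
    · exfalso; apply hn; rw [← h1, h0]; ring
    · exact h0

lemma fmap_prop {n : ℕ} (hn : n ≠ 0) (t : (ℕ × ℕ × ℕ) × (ℕ × ℕ × ℕ)) (h : PP n t) :
    (Lat3 t.1.1 t.1.2.1 t.1.2.2 t.2.1 t.2.2.1 t.2.2.2).index = n ∧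
      (Lat3 t.1.1 t.1.2.1 t.1.2.2 t.2.1 t.2.2.1 t.2.2.2).map ell
        = Lat3 t.1.1 t.1.2.1 t.1.2.2 t.2.1 t.2.2.1 t.2.2.2 := by
  obtain ⟨ha, hb, hc⟩ := PP_pos hn h
  have ha' : ((t.1.1 : ℤ)) ≠ 0 := by exact_mod_cast Nat.pos_iff_ne_zero.1 ha
  have hb' : ((t.1.2.1 : ℤ)) ≠ 0 := by exact_mod_cast Nat.pos_iff_ne_zero.1 hb
  have hc' : ((t.1.2.2 : ℤ)) ≠ 0 := by exact_mod_cast Nat.pos_iff_ne_zero.1 hc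
  constructor
  · rw [index_Lat3 _ _ _ ha' hb' hc']
    have e : ((t.1.1 : ℤ)) * t.1.2.1 * t.1.2.2 = ((t.1.1 * (t.1.2.1 * t.1.2.2) : ℕ) : ℤ) := by
      push_cast; ring
    rw [e, h.1]
    simp
  · refine (map_ell_Lat3 (by positivity) (by positivity) (by positivity)).2 ⟨?_, ?_⟩
    · have := h.2.2.2.2.1
      exact_mod_cast Int.natCast_dvd_natCast.2 this
    · have := h.2.2.2.2.2
      exact_mod_cast Int.natCast_dvd_natCast.2 this


/-- Corollary 3 -/
theorem numSubgroups_ell_invariant (n : ℕ) (hn : 0 < n) :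
    Nat.card {Δ : AddSubgroup (ℤ × ℤ × ℤ) // Δ.index = n ∧ Δ.map ell = Δ} =
      sigma2 n + 3 * atDiv sigma2 2 n := by
  have hn' : n ≠ 0 := hn.ne'
  have key : Nat.card {t : (ℕ × ℕ × ℕ) × (ℕ × ℕ × ℕ) // PP n t}
      = Nat.card {Δ : AddSubgroup (ℤ × ℤ × ℤ) // Δ.index = n ∧ Δ.map ell = Δ} := by
    refine Nat.card_eq_of_bijective
      (fun t => ⟨Lat3 t.1.1.1 t.1.1.2.1 t.1.1.2.2 t.1.2.1 t.1.2.2.1 t.1.2.2.2,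
        fmap_prop hn' t.1 t.2⟩) ⟨?_, ?_⟩
    · -- injective
      rintro ⟨⟨⟨a, b, c⟩, p, q, r⟩, ht⟩ ⟨⟨⟨a', b', c'⟩, p', q', r'⟩, ht'⟩ heq
      simp only [Subtype.mk.injEq] at heq
      obtain ⟨ha, hb, hc⟩ := PP_pos hn' ht
      obtain ⟨ha', hb', hc'⟩ := PP_pos hn' ht'
      simp only at ha hb hc ha' hb' hc'
      obtain ⟨-, hp, hq, hr, -, -⟩ := ht
      obtain ⟨-, hp', hq', hr', -, -⟩ := ht'
      simp only at hp hq hr hp' hq' hr'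
      have := Lat3_inj (by exact_mod_cast ha) (by exact_mod_cast hb) (by exact_mod_cast hc)
        (Int.natCast_nonneg p) (by exact_mod_cast hp) (Int.natCast_nonneg q)
        (by exact_mod_cast hq) (Int.natCast_nonneg r) (by exact_mod_cast hr)
        (by exact_mod_cast ha') (by exact_mod_cast hb') (by exact_mod_cast hc')
        (Int.natCast_nonneg p') (by exact_mod_cast hp') (Int.natCast_nonneg q')
        (by exact_mod_cast hq') (Int.natCast_nonneg r') (by exact_mod_cast hr') heq
      obtain ⟨e1, e2, e3, e4, e5, e6⟩ := this
      have : a = a' ∧ b = b' ∧ c = c' ∧ p = p' ∧ q = q' ∧ r = r' := by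
        exact ⟨by exact_mod_cast e1, by exact_mod_cast e2, by exact_mod_cast e3,
          by exact_mod_cast e4, by exact_mod_cast e5, by exact_mod_cast e6⟩
      obtain ⟨rfl, rfl, rfl, rfl, rfl, rfl⟩ := this
      rfl
    · -- surjective
      rintro ⟨Δ, hidx, hell⟩
      obtain ⟨a, b, c, p, q, r, ha, hb, hc, hp0, hpa, hq0, hqa, hr0, hrb, hΔ⟩ :=
        exists_Lat3 Δ (by rw [hidx]; exact hn')
      have hcast : ∀ x : ℤ, 0 ≤ x → ((x.toNat : ℤ)) = x := fun x hx => Int.toNat_of_nonneg hx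
      have ea := hcast a (le_of_lt ha)
      have eb := hcast b (le_of_lt hb)
      have ec := hcast c (le_of_lt hc)
      have ep := hcast p hp0
      have eq' := hcast q hq0
      have er := hcast r hr0
      have hΔ' : Δ = Lat3 (a.toNat : ℤ) (b.toNat : ℤ) (c.toNat : ℤ) (p.toNat : ℤ)
          (q.toNat : ℤ) (r.toNat : ℤ) := by
        rw [hΔ, ea, eb, ec, ep, eq', er]
      have hdvd : (a:ℤ) ∣ 2 * p ∧ (a:ℤ) ∣ 2 * q := by
        refine (map_ell_Lat3 (p:=p) (q:=q) (r:=r) ha hb hc).1 ?_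
        rw [← hΔ]
        exact hell
      have habc : a.toNat * (b.toNat * c.toNat) = n := by
        have h1 : Δ.index = ((a:ℤ) * b * c).natAbs := by
          rw [hΔ]
          exact index_Lat3 _ _ _ (ne_of_gt ha) (ne_of_gt hb) (ne_of_gt hc)
        have h2 : ((a:ℤ) * b * c).natAbs = a.toNat * (b.toNat * c.toNat) := by
          have habs : ∀ x : ℤ, 0 ≤ x → x.natAbs = x.toNat := fun x hx => by omega
          rw [Int.natAbs_mul, Int.natAbs_mul, habs a (le_of_lt ha), habs b (le_of_lt hb),
            habs c (le_of_lt hc), mul_assoc]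
        rw [← hidx, h1, h2]
      refine ⟨⟨((a.toNat, b.toNat, c.toNat), (p.toNat, q.toNat, r.toNat)), ?_⟩, ?_⟩
      · refine ⟨habc, ?_, ?_, ?_, ?_, ?_⟩
        · show p.toNat < a.toNat
          omega
        · show q.toNat < a.toNat
          omega
        · show r.toNat < b.toNat
          omega
        · show a.toNat ∣ 2 * p.toNat
          have := hdvd.1
          rw [← ea, ← ep] at this
          exact_mod_cast this
        · show a.toNat ∣ 2 * q.toNat
          have := hdvd.2
          rw [← ea, ← eq'] at this
          exact_mod_cast this
      · simp only [Subtype.mk.injEq]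
        exact hΔ'.symm
  rw [← key]
  have e2 : Nat.card {t : (ℕ × ℕ × ℕ) × (ℕ × ℕ × ℕ) // PP n t} = (FF n).card := by
    rw [← Nat.card_eq_finsetCard (FF n)]
    exact Nat.card_congr (Equiv.subtypeEquivRight fun t => (mem_FF hn' t).symm)
  rw [e2, FF_card_eq hn']

end AuxProof
end
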